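/- arXiv:1805.00156 — 5 statements merged into one kernel-verified Lean document; each statement's English description precedes it below -/
import Mathlib

section
/- Let 𝔻 be a direct category and 𝒞 a cocomplete category equipped with two classes of morphisms (ℒ, ℛ) such that ℒ ⋔ ℛ. Define ℒ^𝔻 to be the class of natural transformations α : X → Y in the functor category 𝒞^𝔻 whose latching map L̂_d(α) : X(d) ⊔_{L_d(X)} L_d(Y) → Y(d) lies in ℒ for every object d of 𝔻, and ℛ^𝔻 to be the class of natural transformations α with α_d ∈ ℛ for every object d. Then ℒ^𝔻 ⋔ ℛ^𝔻. -/
open CategoryTheory Limits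

universe w v u

variable {𝒞 : Type u} [Category.{v} 𝒞] [HasColimits 𝒞]
variable {𝒟 : Type v} [SmallCategory 𝒟]

/-- The indexing category `𝒟_{< deg c} ↓ c` for the latching object at `c`: objects of the
slice over `c` whose domain has strictly smaller degree. -/
def LatchIdx (deg : 𝒟 → Ordinal.{w}) (c : 𝒟) : Type v :=
  ObjectProperty.FullSubcategory (fun p : Over c => deg p.left < deg c)

instance (deg : 𝒟 → Ordinal.{w}) (c : 𝒟) : Category (LatchIdx deg c) :=
  ObjectProperty.FullSubcategory.category _

/-- The diagram over which the latching object of `X` at `c` is computed. -/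
def latchDiag (deg : 𝒟 → Ordinal.{w}) (X : 𝒟 ⥤ 𝒞) (c : 𝒟) : LatchIdx deg c ⥤ 𝒞 :=
  (ObjectProperty.ι _ ⋙ Over.forget c) ⋙ X

/-- The latching object `L_c(X) = colim_{𝒟_{< deg c} ↓ c} X`. -/
noncomputable def latchObj (deg : 𝒟 → Ordinal.{w}) (X : 𝒟 ⥤ 𝒞) (c : 𝒟) : 𝒞 :=
  colimit (latchDiag deg X c)

/-- The canonical map `ε_c : L_c(X) ⟶ X(c)`. -/
noncomputable def latchCanonical (deg : 𝒟 → Ordinal.{w}) (X : 𝒟 ⥤ 𝒞) (c : 𝒟) :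
    latchObj deg X c ⟶ X.obj c :=
  colimit.desc (latchDiag deg X c)
    { pt := X.obj c
      ι :=
        { app := fun (p : LatchIdx deg c) => X.map p.obj.hom
          naturality := fun (p q : LatchIdx deg c) (φ : p ⟶ q) => by
            dsimp [latchDiag]
            rw [Category.comp_id]
            change X.map φ.hom.left ≫ X.map q.obj.hom = X.map p.obj.hom
            rw [← X.map_comp, Over.w φ.hom] } }

/-- The map `L_c(X) ⟶ L_c(Y)` induced by a natural transformation `α : X ⟶ Y`. -/
noncomputable def latchHom (deg : 𝒟 → Ordinal.{w}) {X Y : 𝒟 ⥤ 𝒞} (α : X ⟶ Y) (c : 𝒟) :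
    latchObj deg X c ⟶ latchObj deg Y c :=
  colimMap (Functor.whiskerLeft (ObjectProperty.ι _ ⋙ Over.forget c) α)

/-- The latching map `L̂_c(α) : X(c) ⊔_{L_c(X)} L_c(Y) ⟶ Y(c)` of `α : X ⟶ Y` at `c`. -/
noncomputable def latchingMap (deg : 𝒟 → Ordinal.{w}) {X Y : 𝒟 ⥤ 𝒞} (α : X ⟶ Y) (c : 𝒟) :
    pushout (latchCanonical deg X c) (latchHom deg α c) ⟶ Y.obj c :=
  pushout.desc (α.app c) (latchCanonical deg Y c) (by
    apply colimit.hom_ext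
    intro p
    dsimp only [latchCanonical, latchHom, latchDiag]
    erw [colimit.ι_desc_assoc, ι_colimMap_assoc, colimit.ι_desc]
    exact α.naturality p.obj.hom)


section Aux

variable (deg : 𝒟 → Ordinal.{w}) {X Y W Z : 𝒟 ⥤ 𝒞} (α : X ⟶ Y) (β : W ⟶ Z)
  (u : X ⟶ W) (v : Y ⟶ Z)

/-- `prev` is a good partial lift on objects of degree below `deg d`. -/
def GoodPrev (d : 𝒟) (prev : ∀ e, deg e < deg d → Option (Y.obj e ⟶ W.obj e)) : Prop :=
  (∀ e he, (prev e he).isSome) ∧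
  (∀ e (he : deg e < deg d) l, prev e he = some l →
      α.app e ≫ l = u.app e ∧ l ≫ β.app e = v.app e) ∧
  (∀ e e' (he : deg e < deg d) (he' : deg e' < deg d) (p : e ⟶ e') l l',
      prev e he = some l → prev e' he' = some l' → Y.map p ≫ l' = l ≫ W.map p)

/-- The cocone over the latching diagram of `Y` at `d` built from a good partial lift. -/
noncomputable def auxCocone (d : 𝒟) (prev : ∀ e, deg e < deg d → Option (Y.obj e ⟶ W.obj e))
    (h : GoodPrev deg α β u v d prev) : Cocone (latchDiag deg Y d) where
  pt := W.obj d
  ι :=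
    { app := fun p => (prev p.obj.left p.property).get (h.1 _ _) ≫ W.map p.obj.hom
      naturality := fun p q φ => by
        have h3 := h.2.2 p.obj.left q.obj.left p.property q.property φ.hom.left _ _
          (Option.some_get (h.1 p.obj.left p.property)).symm
          (Option.some_get (h.1 q.obj.left q.property)).symm
        dsimp [latchDiag]
        rw [Category.comp_id]
        change Y.map φ.hom.left ≫ _ ≫ W.map q.obj.hom = _
        rw [← Category.assoc, h3, Category.assoc, ← W.map_comp, Over.w φ.hom]
        rfl }

noncomputable def auxDesc (d : 𝒟) (prev : ∀ e, deg e < deg d → Option (Y.obj e ⟶ W.obj e))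
    (h : GoodPrev deg α β u v d prev) : latchObj deg Y d ⟶ W.obj d :=
  colimit.desc _ (auxCocone deg α β u v d prev h)

lemma auxDesc_w (d : 𝒟) (prev : ∀ e, deg e < deg d → Option (Y.obj e ⟶ W.obj e))
    (h : GoodPrev deg α β u v d prev) :
    latchCanonical deg X d ≫ u.app d = latchHom deg α d ≫ auxDesc deg α β u v d prev h := by
  apply colimit.hom_ext
  intro p
  have h2 := (h.2.1 p.obj.left p.property _ (Option.some_get (h.1 _ _)).symm).1
  dsimp only [latchCanonical, latchHom, auxDesc]
  erw [colimit.ι_desc_assoc, ι_colimMap_assoc, colimit.ι_desc]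
  change X.map p.obj.hom ≫ u.app d
    = α.app p.obj.left ≫ (prev p.obj.left p.property).get (h.1 _ _) ≫ W.map p.obj.hom
  rw [← Category.assoc, h2]
  exact u.naturality p.obj.hom

noncomputable def auxTop (d : 𝒟) (prev : ∀ e, deg e < deg d → Option (Y.obj e ⟶ W.obj e))
    (h : GoodPrev deg α β u v d prev) :
    pushout (latchCanonical deg X d) (latchHom deg α d) ⟶ W.obj d :=
  pushout.desc (u.app d) (auxDesc deg α β u v d prev h) (auxDesc_w deg α β u v d prev h)

lemma auxSq (hs : u ≫ β = α ≫ v) (d : 𝒟)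
    (prev : ∀ e, deg e < deg d → Option (Y.obj e ⟶ W.obj e))
    (h : GoodPrev deg α β u v d prev) :
    CommSq (auxTop deg α β u v d prev h) (latchingMap deg α d) (β.app d) (v.app d) := by
  constructor
  apply pushout.hom_ext
  · have e1 : pushout.inl _ _ ≫ auxTop deg α β u v d prev h = u.app d := pushout.inl_desc _ _ _
    have e2 : pushout.inl _ _ ≫ latchingMap deg α d = α.app d := pushout.inl_desc _ _ _
    rw [reassoc_of% e1, reassoc_of% e2]
    exact congrArg (fun t => NatTrans.app t d) hs
  · have e1 : pushout.inr _ _ ≫ auxTop deg α β u v d prev h = auxDesc deg α β u v d prev h :=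
      pushout.inr_desc _ _ _
    have e2 : pushout.inr _ _ ≫ latchingMap deg α d = latchCanonical deg Y d := pushout.inr_desc _ _ _
    rw [reassoc_of% e1, reassoc_of% e2]
    apply colimit.hom_ext
    intro p
    have h2 := (h.2.1 p.obj.left p.property _ (Option.some_get (h.1 _ _)).symm).2
    dsimp only [auxDesc, latchCanonical]
    erw [colimit.ι_desc_assoc, colimit.ι_desc_assoc]
    change ((prev p.obj.left p.property).get (h.1 _ _) ≫ W.map p.obj.hom) ≫ β.app d
      = Y.map p.obj.hom ≫ v.app d
    have hb := β.naturality p.obj.hom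
    have hv := v.naturality p.obj.hom
    rw [Category.assoc, hb, ← Category.assoc, h2]
    exact hv.symm

noncomputable def auxStep (hlift : ∀ d, HasLiftingProperty (latchingMap deg α d) (β.app d))
    (hs : u ≫ β = α ≫ v) (d : 𝒟)
    (prev : ∀ e, deg e < deg d → Option (Y.obj e ⟶ W.obj e)) : Option (Y.obj d ⟶ W.obj d) :=
  @dite _ (GoodPrev deg α β u v d prev) (Classical.dec _)
    (fun h =>
      haveI := hlift d
      some (auxSq deg α β u v hs d prev h).lift)
    (fun _ => none)

noncomputable def auxF (hlift : ∀ d, HasLiftingProperty (latchingMap deg α d) (β.app d))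
    (hs : u ≫ β = α ≫ v) : ∀ d, Option (Y.obj d ⟶ W.obj d) :=
  (InvImage.wf deg Ordinal.lt_wf).fix
    (fun d ih => auxStep deg α β u v hlift hs d (fun e he => ih e he))

lemma auxF_good
    (hdeg : ∀ {a b : 𝒟} (f : a ⟶ b), ¬ deg a < deg b → ∃ h : a = b, f = eqToHom h)
    (hlift : ∀ d, HasLiftingProperty (latchingMap deg α d) (β.app d))
    (hs : u ≫ β = α ≫ v) (d : 𝒟) :
    ∃ l, auxF deg α β u v hlift hs d = some l ∧
      α.app d ≫ l = u.app d ∧ l ≫ β.app d = v.app d ∧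
      ∀ e (he : deg e < deg d) (p : e ⟶ d) l',
        auxF deg α β u v hlift hs e = some l' → Y.map p ≫ l = l' ≫ W.map p := by
  induction d using WellFounded.induction (InvImage.wf deg Ordinal.lt_wf) with
  | _ d IH =>
  have hgood : GoodPrev deg α β u v d (fun e _ => auxF deg α β u v hlift hs e) := by
    refine ⟨?_, ?_, ?_⟩
    · intro e he
      obtain ⟨l, hl, -⟩ := IH e he
      simp [hl]
    · intro e he l hl
      replace hl : auxF deg α β u v hlift hs e = some l := hl
      obtain ⟨l0, hl0, h1, h2, -⟩ := IH e he
      rw [hl0] at hl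
      obtain rfl := (Option.some_inj.mp hl).symm
      exact ⟨h1, h2⟩
    · intro e e' he he' p l l' hl hl'
      replace hl : auxF deg α β u v hlift hs e = some l := hl
      replace hl' : auxF deg α β u v hlift hs e' = some l' := hl'
      by_cases hc : deg e < deg e'
      · obtain ⟨l0, hl0, -, -, hcross⟩ := IH e' he'
        rw [hl0] at hl'
        obtain rfl := (Option.some_inj.mp hl').symm
        exact hcross e hc p l hl
      · obtain ⟨rfl, rfl⟩ := hdeg p hc
        rw [hl] at hl'
        obtain rfl := Option.some_inj.mp hl'
        simp
  have hF : auxF deg α β u v hlift hs d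
      = auxStep deg α β u v hlift hs d (fun e _ => auxF deg α β u v hlift hs e) :=
    WellFounded.fix_eq _ _ d
  rw [auxStep, dif_pos hgood] at hF
  haveI := hlift d
  refine ⟨(auxSq deg α β u v hs d _ hgood).lift, hF, ?_, ?_, ?_⟩
  · have h1 := (auxSq deg α β u v hs d _ hgood).fac_left
    have h2 : pushout.inl (latchCanonical deg X d) (latchHom deg α d) ≫ latchingMap deg α d
        = α.app d := by unfold latchingMap; exact pushout.inl_desc _ _ _
    calc α.app d ≫ (auxSq deg α β u v hs d _ hgood).lift
        = pushout.inl _ _ ≫ latchingMap deg α d ≫ (auxSq deg α β u v hs d _ hgood).lift := by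
          rw [← Category.assoc, h2]
      _ = pushout.inl _ _ ≫ auxTop deg α β u v d _ hgood := by rw [h1]
      _ = u.app d := by unfold auxTop; exact pushout.inl_desc _ _ _
  · exact (auxSq deg α β u v hs d _ hgood).fac_right
  · intro e he p l' hl'
    have h1 := (auxSq deg α β u v hs d _ hgood).fac_left
    have h2 : pushout.inr (latchCanonical deg X d) (latchHom deg α d) ≫ latchingMap deg α d
        = latchCanonical deg Y d := by unfold latchingMap; exact pushout.inr_desc _ _ _
    have h3 : latchCanonical deg Y d ≫ (auxSq deg α β u v hs d _ hgood).lift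
        = auxDesc deg α β u v d _ hgood := by
      rw [← h2, Category.assoc, h1]
      unfold auxTop; exact pushout.inr_desc _ _ _
    have h4 := congrArg (fun t => colimit.ι (latchDiag deg Y d)
      (@id (LatchIdx deg d) ⟨Over.mk p, he⟩) ≫ t) h3
    replace h4 := (Category.assoc _ _ _).trans h4
    have h5 : colimit.ι (latchDiag deg Y d) (@id (LatchIdx deg d) ⟨Over.mk p, he⟩)
        ≫ latchCanonical deg Y d = Y.map p := by
      unfold latchCanonical; exact colimit.ι_desc _ _
    have h6 : colimit.ι (latchDiag deg Y d) (@id (LatchIdx deg d) ⟨Over.mk p, he⟩)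
        ≫ auxDesc deg α β u v d (fun e _ => auxF deg α β u v hlift hs e) hgood
        = l' ≫ W.map p := by
      unfold auxDesc; refine (colimit.ι_desc _ _).trans ?_
      change (auxF deg α β u v hlift hs e).get _ ≫ W.map p = l' ≫ W.map p
      congr 1
      have : auxF deg α β u v hlift hs e = some l' := hl'
      simp [this]
    exact (congrArg (· ≫ _) h5).symm.trans (h4.trans h6)

end Aux

/-- Let `𝒟` be a direct category and `𝒞` cocomplete,
equipped with classes `(ℒ, ℛ)` with `ℒ ⋔ ℛ`.  If `α` has all its latching maps in `ℒ`
and `β` is objectwise in `ℛ`, then `α` has the left lifting property against `β`;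
that is, `ℒ^𝒟 ⋔ ℛ^𝒟`. -/
theorem stmt_1 (deg : 𝒟 → Ordinal.{w})
    (hdeg : ∀ {a b : 𝒟} (f : a ⟶ b), ¬ deg a < deg b → ∃ h : a = b, f = eqToHom h)
    (ℒ ℛ : MorphismProperty 𝒞)
    (hLR : ∀ ⦃A B X Y : 𝒞⦄ (i : A ⟶ B) (p : X ⟶ Y), ℒ i → ℛ p → HasLiftingProperty i p)
    {X Y W Z : 𝒟 ⥤ 𝒞} (α : X ⟶ Y) (β : W ⟶ Z)
    (hα : ∀ d : 𝒟, ℒ (latchingMap deg α d)) (hβ : ∀ d : 𝒟, ℛ (β.app d)) :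
    HasLiftingProperty α β := by
  constructor
  intro f g sq
  haveI hlift : ∀ d, HasLiftingProperty (latchingMap deg α d) (β.app d) :=
    fun d => hLR _ _ (hα d) (hβ d)
  have hs : f ≫ β = α ≫ g := sq.w
  have good := auxF_good deg α β f g hdeg hlift hs
  choose l hl h1 h2 h3 using good
  constructor
  constructor
  refine
    { l := { app := l, naturality := ?_ }
      fac_left := ?_
      fac_right := ?_ }
  · intro a b p
    by_cases hc : deg a < deg b
    · exact h3 b a hc p (l a) (hl a)
    · obtain ⟨rfl, rfl⟩ := hdeg p hc
      simp
  · ext d; exact h1 d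
  · ext d; exact h2 d
end

section
/- Let 𝒞 be a finitely cocomplete category and D : 𝔾 → 𝒞 a coglobular object, and let ! : ∅ → D denote the unique map from the initial object of the functor category 𝒞^𝔾. Then the latching map of ! at 1 is (D(σ_0), D(τ_0)) : D_0 ⊔ D_0 → D_1, and for every n ≥ 1 the latching object L_{n+1}(D) is the pushout of the latching map L̂_n(!) : L_n(D) → D_n along itself, i.e. L_{n+1}(D) ≅ D_n ⊔_{L_n(D)} D_n, in such a way that under this identification the latching map L̂_{n+1}(!) : L_{n+1}(D) → D_{n+1} is the map induced by D(σ_n) and D(τ_n). -/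
open CategoryTheory Opposite

/-- Morphisms of the globe category: for `m < n` there are exactly two morphisms `m ⟶ n`
(the iterated cosource `σ` and cotarget `τ`, which in the quotient of the free category by
the coglobular relations are classified by the innermost generator). -/
inductive GlobeHom : ℕ → ℕ → Type
  | id (n : ℕ) : GlobeHom n n
  | gen (b : Bool) {m n : ℕ} (h : m < n) : GlobeHom m n

namespace GlobeHom

def comp : ∀ {a b c : ℕ}, GlobeHom a b → GlobeHom b c → GlobeHom a c
  | _, _, _, .id _, g => g
  | _, _, _, .gen b h, .id _ => .gen b h
  | _, _, _, .gen b h, .gen _ h' => .gen b (h.trans h')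

theorem comp_id' : ∀ {a b : ℕ} (f : GlobeHom a b), comp f (.id b) = f
  | _, _, .id _ => rfl
  | _, _, .gen _ _ => rfl

theorem assoc' : ∀ {a b c d : ℕ} (f : GlobeHom a b) (g : GlobeHom b c) (h : GlobeHom c d),
    comp (comp f g) h = comp f (comp g h)
  | _, _, _, _, .id _, _, _ => rfl
  | _, _, _, _, .gen _ _, .id _, _ => rfl
  | _, _, _, _, .gen _ _, .gen _ _, .id _ => rfl
  | _, _, _, _, .gen _ _, .gen _ _, .gen _ _ => rfl

end GlobeHom

/-- The globe category `𝔾`: the quotient of the free category on the graph with objects `ℕ`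
and arrows `σ_n, τ_n : n → n+1` by the coglobular relations `σσ = τσ`, `στ = ττ`. -/
structure Globe where
  pt : ℕ

instance : Category.{0} Globe where
  Hom a b := GlobeHom a.pt b.pt
  id a := .id a.pt
  comp f g := f.comp g
  id_comp f := rfl
  comp_id f := GlobeHom.comp_id' f
  assoc f g h := GlobeHom.assoc' f g h

def gσ (n : ℕ) : (⟨n⟩ : Globe) ⟶ ⟨n + 1⟩ := .gen false (Nat.lt_succ_self n)
def gτ (n : ℕ) : (⟨n⟩ : Globe) ⟶ ⟨n + 1⟩ := .gen true (Nat.lt_succ_self n)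


open Limits

universe u v

/-- The slice category `𝔾_{< n} ↓ n` indexing the latching object at `n` of a coglobular
object: objects of `𝔾` of degree `< n` equipped with a morphism to `n`. -/
structure GlobeSlice (n : ℕ) where
  m : ℕ
  hm : m < n
  f : GlobeHom m n

instance (n : ℕ) : CategoryStruct (GlobeSlice n) where
  Hom p q := { g : GlobeHom p.m q.m // g.comp q.f = p.f }
  id p := ⟨.id p.m, rfl⟩
  comp {p q r} g h := ⟨g.1.comp h.1, by rw [GlobeHom.assoc', h.2, g.2]⟩

instance (n : ℕ) : Category (GlobeSlice n) where
  id_comp f := Subtype.ext rfl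
  comp_id f := Subtype.ext (GlobeHom.comp_id' f.1)
  assoc f g h := Subtype.ext (GlobeHom.assoc' f.1 g.1 h.1)

variable {𝒞 : Type u} [Category.{v} 𝒞]

/-- The diagram of which the latching object of a coglobular object `D` at `n` is the
colimit. -/
def sliceDiag (D : Globe ⥤ 𝒞) (n : ℕ) : GlobeSlice n ⥤ 𝒞 where
  obj p := D.obj ⟨p.m⟩
  map {p q} g := D.map g.1
  map_id p := D.map_id ⟨p.m⟩
  map_comp {p q r} g h := by
    exact D.map_comp (show (⟨p.m⟩ : Globe) ⟶ ⟨q.m⟩ from g.1)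
      (show (⟨q.m⟩ : Globe) ⟶ ⟨r.m⟩ from h.1)

/-- `(W, ι, ℓ)` is a latching object of the coglobular object `D` at `n` with canonical map
`ℓ : W ⟶ D_n` if `(W, ι)` is a colimit cocone of the slice diagram `𝔾_{< n} ↓ n ⥤ 𝒞` and
`ℓ` is compatible with the maps of the slice. -/
def IsLatching (D : Globe ⥤ 𝒞) (n : ℕ) {W : 𝒞}
    (ι : ∀ p : GlobeSlice n, D.obj ⟨p.m⟩ ⟶ W)
    (nat : ∀ {p q : GlobeSlice n} (g : p ⟶ q), D.map g.1 ≫ ι q = ι p)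
    (ℓ : W ⟶ D.obj ⟨n⟩) : Prop :=
  Nonempty (IsColimit (⟨W,
    { app := ι
      naturality := fun {p q} g => by
        dsimp [sliceDiag]; rw [Category.comp_id]; exact nat g }⟩ :
    Cocone (sliceDiag D n))) ∧
  ∀ p : GlobeSlice n, ι p ≫ ℓ = D.map p.f

/-- The bool classifying a non-identity globe morphism. -/
def GlobeHom.boolOf : ∀ {m n : ℕ}, GlobeHom m n → Bool
  | _, _, .id _ => false
  | _, _, .gen b _ => b

theorem GlobeHom.eq_gen {m n : ℕ} (f : GlobeHom m n) (h : m < n) :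
    f = .gen f.boolOf h := by
  cases f with
  | id => exact absurd h (Nat.lt_irrefl _)
  | gen b h' => rfl

/-- The latching cocone at `1`. -/
noncomputable def iota1 (D : Globe ⥤ 𝒞) [HasFiniteColimits 𝒞] (p : GlobeSlice 1) :
    D.obj ⟨p.m⟩ ⟶ D.obj ⟨0⟩ ⨿ D.obj ⟨0⟩ :=
  eqToHom (congrArg (fun k => D.obj ⟨k⟩) (Nat.lt_one_iff.mp p.hm)) ≫
    (bif p.f.boolOf then coprod.inr else coprod.inl)

/-- The latching cocone at `n + 1`, given a latching object at `n`. -/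
noncomputable def iota2 (D : Globe ⥤ 𝒞) [HasFiniteColimits 𝒞] {n : ℕ} {W : 𝒞}
    (ι : ∀ p : GlobeSlice n, D.obj ⟨p.m⟩ ⟶ W) (ℓ : W ⟶ D.obj ⟨n⟩)
    (p : GlobeSlice (n + 1)) : D.obj ⟨p.m⟩ ⟶ pushout ℓ ℓ :=
  if h : p.m < n then ι ⟨p.m, h, .gen p.f.boolOf h⟩ ≫ ℓ ≫ pushout.inl ℓ ℓ
  else
    eqToHom (congrArg (fun k => D.obj ⟨k⟩)
        (show p.m = n by have := p.hm; omega)) ≫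
      (bif p.f.boolOf then pushout.inr ℓ ℓ else pushout.inl ℓ ℓ)

/-- For a coglobular object `D` in a finitely cocomplete category, the
latching object at `1` is `D_0 ⊔ D_0` with latching map `(D σ₀, D τ₀)`, and for `n ≥ 1`,
given a latching object `(W, ℓ)` at `n`, the two composites `ℓ ≫ D σₙ` and `ℓ ≫ D τₙ`
agree and the pushout `Dₙ ⊔_{Lₙ} Dₙ` of `ℓ` along itself is a latching object at `n + 1`,
with latching map induced by `D σₙ` and `D τₙ`. -/
theorem stmt_3 [HasFiniteColimits 𝒞] (D : Globe ⥤ 𝒞) :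
    (∃ (ι : ∀ p : GlobeSlice 1, D.obj ⟨p.m⟩ ⟶ (D.obj ⟨0⟩ ⨿ D.obj ⟨0⟩))
       (nat : ∀ {p q : GlobeSlice 1} (g : p ⟶ q), D.map g.1 ≫ ι q = ι p),
       IsLatching D 1 ι nat (coprod.desc (D.map (gσ 0)) (D.map (gτ 0)))) ∧
    (∀ (n : ℕ), 1 ≤ n → ∀ (W : 𝒞) (ι : ∀ p : GlobeSlice n, D.obj ⟨p.m⟩ ⟶ W)
       (nat : ∀ {p q : GlobeSlice n} (g : p ⟶ q), D.map g.1 ≫ ι q = ι p)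
       (ℓ : W ⟶ D.obj ⟨n⟩), IsLatching D n ι nat ℓ →
       ∃ (h : ℓ ≫ D.map (GlobeHom.gen false (Nat.lt_succ_self n)) =
              ℓ ≫ D.map (GlobeHom.gen true (Nat.lt_succ_self n)))
         (ι' : ∀ p : GlobeSlice (n + 1), D.obj ⟨p.m⟩ ⟶ pushout ℓ ℓ)
         (nat' : ∀ {p q : GlobeSlice (n + 1)} (g : p ⟶ q), D.map g.1 ≫ ι' q = ι' p),
         IsLatching D (n + 1) ι' nat'
           (pushout.desc (D.map (GlobeHom.gen false (Nat.lt_succ_self n)))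
             (D.map (GlobeHom.gen true (Nat.lt_succ_self n))) h)) := by
  constructor
  · -- Part 1 : the latching object at 1 is `D₀ ⊔ D₀`
    have nat1 : ∀ {p q : GlobeSlice 1} (g : p ⟶ q),
        D.map g.1 ≫ iota1 D q = iota1 D p := by
      rintro ⟨pm, hp, pf⟩ ⟨qm, hq, qf⟩ ⟨g1, hg⟩
      obtain rfl := Nat.lt_one_iff.mp hp
      obtain rfl := Nat.lt_one_iff.mp hq
      cases g1 with
      | id =>
        obtain rfl : qf = pf := hg
        rw [show D.map (GlobeHom.id 0 : (⟨0⟩ : Globe) ⟶ ⟨0⟩) = 𝟙 _ from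
          D.map_id ⟨0⟩, Category.id_comp]
      | gen b hlt => exact absurd hlt (Nat.lt_irrefl _)
    refine ⟨iota1 D, nat1, ⟨{
        desc := fun c => coprod.desc
          (c.ι.app ⟨0, Nat.one_pos, .gen false Nat.one_pos⟩)
          (c.ι.app ⟨0, Nat.one_pos, .gen true Nat.one_pos⟩)
        fac := ?_
        uniq := ?_ }⟩, ?_⟩
    · rintro c ⟨pm, hp, pf⟩
      obtain rfl := Nat.lt_one_iff.mp hp
      cases pf with
      | gen b hlt =>
        cases b <;>
          simp [iota1, GlobeHom.boolOf] <;> exact colimit.ι_desc _ _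
    · intro c g hg
      apply coprod.hom_ext
      · refine Eq.trans ?_ (coprod.inl_desc _ _).symm
        have h := hg ⟨0, Nat.one_pos, .gen false Nat.one_pos⟩
        simp [iota1, GlobeHom.boolOf] at h
        exact h
      · refine Eq.trans ?_ (coprod.inr_desc _ _).symm
        have h := hg ⟨0, Nat.one_pos, .gen true Nat.one_pos⟩
        simp [iota1, GlobeHom.boolOf] at h
        exact h
    · rintro ⟨pm, hp, pf⟩
      obtain rfl := Nat.lt_one_iff.mp hp
      cases pf with
      | gen b hlt =>
        cases b <;> simp [iota1, GlobeHom.boolOf, gσ, gτ] <;> exact colimit.ι_desc _ _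
  · -- Part 2 : induction step
    intro n _hn W ι nat ℓ hL
    obtain ⟨⟨hc⟩, hcomp⟩ := hL
    -- key computation
    have key0 : ∀ (p : GlobeSlice n) (b : Bool),
        ι p ≫ ℓ ≫ D.map (GlobeHom.gen b (Nat.lt_succ_self n)) =
          D.map (GlobeHom.gen p.f.boolOf (p.hm.trans (Nat.lt_succ_self n)) :
            (⟨p.m⟩ : Globe) ⟶ ⟨n + 1⟩) := by
      intro p b
      rw [← Category.assoc, hcomp p, GlobeHom.eq_gen p.f p.hm, ← D.map_comp]
      rfl
    have hcond : ℓ ≫ D.map (GlobeHom.gen false (Nat.lt_succ_self n)) =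
        ℓ ≫ D.map (GlobeHom.gen true (Nat.lt_succ_self n)) := by
      apply hc.hom_ext
      intro p
      exact (key0 p false).trans (key0 p true).symm
    -- the two "top" objects of the slice at n+1
    set Pf : GlobeSlice (n + 1) :=
      ⟨n, Nat.lt_succ_self n, .gen false (Nat.lt_succ_self n)⟩ with hPf
    set Pt : GlobeSlice (n + 1) :=
      ⟨n, Nat.lt_succ_self n, .gen true (Nat.lt_succ_self n)⟩ with hPt
    -- naturality of the candidate cocone
    have nat2 : ∀ {p q : GlobeSlice (n + 1)} (g : p ⟶ q),
        D.map g.1 ≫ iota2 D ι ℓ q = iota2 D ι ℓ p := by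
      rintro ⟨pm, hp, pf⟩ ⟨qm, hq, qf⟩ ⟨g1, hg⟩
      cases g1 with
      | id =>
        obtain rfl : qf = pf := hg
        rw [show D.map (GlobeHom.id pm : (⟨pm⟩ : Globe) ⟶ ⟨pm⟩) = 𝟙 _ from
          D.map_id ⟨pm⟩, Category.id_comp]
      | gen b' hlt =>
        cases qf with
        | id => exact absurd hq (Nat.lt_irrefl _)
        | gen bq hq' =>
          cases pf with
          | id => exact absurd hp (Nat.lt_irrefl _)
          | gen bp hp' =>
            have hg' : GlobeHom.gen b' (hlt.trans hq') = GlobeHom.gen bp hp' := hg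
            injection hg' with hb
            subst hb
            by_cases hqn : qm < n
            · rw [iota2, iota2, dif_pos hqn, dif_pos (hlt.trans hqn)]
              simp only [GlobeHom.boolOf]
              have hnat := nat (p := ⟨pm, hlt.trans hqn, .gen b' (hlt.trans hqn)⟩)
                (q := ⟨qm, hqn, .gen bq hqn⟩) ⟨.gen b' hlt, rfl⟩
              simp only [← Category.assoc]
              rw [show D.map (GlobeHom.gen b' hlt : (⟨pm⟩ : Globe) ⟶ ⟨qm⟩) ≫
                ι ⟨qm, hqn, .gen bq hqn⟩ = ι ⟨pm, hlt.trans hqn, .gen b' (hlt.trans hqn)⟩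
                from hnat]
            · have hqe : qm = n := by omega
              subst hqe
              rw [iota2, iota2, dif_neg hqn, dif_pos hlt]
              simp only [GlobeHom.boolOf, eqToHom_refl, Category.id_comp]
              have h2 : ι ⟨pm, hlt, .gen b' hlt⟩ ≫ ℓ =
                  D.map (GlobeHom.gen b' hlt : (⟨pm⟩ : Globe) ⟶ ⟨qm⟩) := hcomp _
              rw [← Category.assoc, h2]
              cases bq
              · rfl
              · rw [← h2, Category.assoc, Category.assoc, pushout.condition]
                rfl
    have iota2_top : ∀ (b : Bool) (h : n < n + 1),
        iota2 D ι ℓ ⟨n, h, .gen b h⟩ =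
          (bif b then pushout.inr ℓ ℓ else pushout.inl ℓ ℓ) := by
      intro b h
      rw [iota2, dif_neg (Nat.lt_irrefl n)]
      simp [GlobeHom.boolOf]
    refine ⟨hcond, iota2 D ι ℓ, nat2, ⟨{
        desc := fun c => pushout.desc (c.ι.app Pf) (c.ι.app Pt) ?_
        fac := ?_
        uniq := ?_ }⟩, ?_⟩
    · -- ℓ equalizes the two top cocone legs
      apply hc.hom_ext
      intro p
      have hb := GlobeHom.eq_gen p.f p.hm
      have e1 := c.w (j' := ⟨p.m, p.hm.trans (Nat.lt_succ_self n),
          .gen p.f.boolOf (p.hm.trans (Nat.lt_succ_self n))⟩) (j := Pf)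
        ⟨.gen p.f.boolOf p.hm, rfl⟩
      have e2 := c.w (j' := ⟨p.m, p.hm.trans (Nat.lt_succ_self n),
          .gen p.f.boolOf (p.hm.trans (Nat.lt_succ_self n))⟩) (j := Pt)
        ⟨.gen p.f.boolOf p.hm, rfl⟩
      dsimp [sliceDiag] at e1 e2
      show ι p ≫ ℓ ≫ c.ι.app Pf = ι p ≫ ℓ ≫ c.ι.app Pt
      erw [← Category.assoc, hcomp p, ← Category.assoc, hcomp p]
      rw [hb]
      exact e1.trans e2.symm
    · rintro c ⟨pm, hp, pf⟩
      cases pf with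
      | id => exact absurd hp (Nat.lt_irrefl _)
      | gen b h' =>
        by_cases hpn : pm < n
        · show iota2 D ι ℓ ⟨pm, hp, .gen b h'⟩ ≫ _ = _
          rw [iota2, dif_pos hpn]
          simp only [GlobeHom.boolOf, Category.assoc, pushout.inl_desc]
          rw [← Category.assoc, hcomp ⟨pm, hpn, .gen b hpn⟩]
          have ew := c.w (j' := ⟨pm, hp, .gen b h'⟩) (j := Pf) ⟨.gen b hpn, rfl⟩
          dsimp [sliceDiag] at ew
          erw [pushout.inl_desc]
          exact ew
        · have hpe : pm = n := by omega
          subst hpe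
          show iota2 D ι ℓ ⟨pm, hp, .gen b h'⟩ ≫ _ = _
          rw [iota2, dif_neg hpn]
          cases b <;>
            simp [GlobeHom.boolOf] <;> exact colimit.ι_desc _ _
    · intro c g hg
      apply pushout.hom_ext
      · erw [pushout.inl_desc]
        have := hg Pf
        dsimp only at this
        rw [iota2_top] at this
        simp at this
        exact this
      · erw [pushout.inr_desc]
        have := hg Pt
        dsimp only at this
        rw [iota2_top] at this
        simp at this
        exact this
    · rintro ⟨pm, hp, pf⟩
      cases pf with
      | id => exact absurd hp (Nat.lt_irrefl _)
      | gen b h' =>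
        by_cases hpn : pm < n
        · show iota2 D ι ℓ ⟨pm, hp, .gen b h'⟩ ≫ _ = _
          rw [iota2, dif_pos hpn]
          simp only [GlobeHom.boolOf, Category.assoc, pushout.inl_desc]
          rw [← Category.assoc, hcomp ⟨pm, hpn, .gen b hpn⟩]
          rw [← D.map_comp]
          rfl
        · have hpe : pm = n := by omega
          subst hpe
          show iota2 D ι ℓ ⟨pm, hp, .gen b h'⟩ ≫ _ = _
          rw [iota2, dif_neg hpn]
          cases b <;> simp [GlobeHom.boolOf] <;> exact colimit.ι_desc _ _
end

section
/- For all natural numbers m and n, the pushout in the category of small categories of the inclusions ι_n : * → I_n (picking out the endpoint (0,n)) and ι_0 : * → I_m (picking out the endpoint (0,0)) is isomorphic to I_{m+n}. -/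
open CategoryTheory Limits

universe u v

/-- The objects of the free zig-zag category `I_n`: `top k` is the object `(0, k)` for
`0 ≤ k ≤ n` and `bot k` is the object `(1, k)` for `0 ≤ k ≤ n - 1`. -/
inductive Zig (n : ℕ) : Type
  | top (k : ℕ) (hk : k ≤ n) : Zig n
  | bot (k : ℕ) (hk : k < n) : Zig n

namespace Zig

/-- The order on `I_n` generated by `(0,k) ≺ (1,k)` and `(0,m) ≺ (1,m-1)`. -/
def le {n : ℕ} : Zig n → Zig n → Prop
  | .top k _, .top k' _ => k = k'
  | .bot k _, .bot k' _ => k = k'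
  | .top k _, .bot j _ => k = j ∨ k = j + 1
  | .bot _ _, .top _ _ => False

instance (n : ℕ) : PartialOrder (Zig n) where
  le := le
  le_refl x := by cases x <;> simp [le]
  le_trans x y z h₁ h₂ := by
    cases x <;> cases y <;> cases z <;> simp_all [le] <;> omega
  le_antisymm x y h₁ h₂ := by
    cases x with
    | top k hk =>
      cases y with
      | top k' hk' => obtain rfl : k = k' := h₁; rfl
      | bot j hj => exact (h₂ : False).elim
    | bot k hk =>
      cases y with
      | top k' hk' => exact (h₁ : False).elim
      | bot j hj => obtain rfl : k = j := h₁; rfl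

/-- The initial endpoint `(0, 0)` of `I_n`. -/
def zfirst (n : ℕ) : Zig n := .top 0 (Nat.zero_le n)

/-- The terminal endpoint `(0, n)` of `I_n`. -/
def zlast (n : ℕ) : Zig n := .top n le_rfl

end Zig

/-- The inclusion `ι_n : * → I_n` of the endpoint `(0, n)`, as a morphism of `Cat`. -/
def endLast (n : ℕ) : Cat.of (Discrete PUnit) ⟶ Cat.of (Zig n) :=
  (Functor.fromPUnit (Zig.zlast n)).toCatHom

/-- The inclusion `ι_0 : * → I_m` of the endpoint `(0, 0)`, as a morphism of `Cat`. -/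
def endFirst (m : ℕ) : Cat.of (Discrete PUnit) ⟶ Cat.of (Zig m) :=
  (Functor.fromPUnit (Zig.zfirst m)).toCatHom

namespace ZigPush

open CategoryTheory Limits Zig

variable {m n : ℕ}

lemma le_iff {N : ℕ} {x y : Zig N} : x ≤ y ↔ Zig.le x y := Iff.rfl

instance {N : ℕ} (x y : Zig N) : Subsingleton (x ⟶ y) := by
  infer_instance

/-- inclusion of `Zig n` into `Zig (m+n)` -/
def inclFun (m n : ℕ) : Zig n → Zig (m + n)
  | .top k _ => .top k (by omega)
  | .bot k _ => .bot k (by omega)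

lemma inclFun_mono : Monotone (inclFun m n) := by
  intro x y h
  cases x <;> cases y <;>
    simp_all [inclFun, le_iff, Zig.le]

/-- shifted inclusion of `Zig m` into `Zig (m+n)` -/
def shiftFun (m n : ℕ) : Zig m → Zig (m + n)
  | .top k _ => .top (n + k) (by omega)
  | .bot k _ => .bot (n + k) (by omega)

lemma shiftFun_mono : Monotone (shiftFun m n) := by
  intro x y h
  cases x <;> cases y <;>
    simp_all [shiftFun, le_iff, Zig.le] <;> omega

end ZigPush
namespace ZigPush

section Desc

open CategoryTheory Zig

variable {m n : ℕ} {C : Type*} [Category C] (α : Zig n ⥤ C) (β : Zig m ⥤ C)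
  (hαβ : α.obj (Zig.zlast n) = β.obj (Zig.zfirst m))

/-- object part of the descent functor -/
def descObj : Zig (m + n) → C
  | .top k _ => if h : k ≤ n then α.obj (.top k h) else β.obj (.top (k - n) (by omega))
  | .bot k _ => if h : k < n then α.obj (.bot k h) else β.obj (.bot (k - n) (by omega))

lemma descObj_top_le {k : ℕ} (hk : k ≤ m + n) (h : k ≤ n) :
    descObj α β (.top k hk) = α.obj (.top k h) := dif_pos h

include hαβ in
lemma descObj_top_ge {k : ℕ} (hk : k ≤ m + n) (h : n ≤ k) :
    descObj α β (.top k hk) = β.obj (.top (k - n) (by omega)) := by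
  by_cases hlt : n < k
  · exact dif_neg (by omega)
  · have hk' : n = k := by omega
    subst hk'
    have e1 : descObj α β (.top n hk) = α.obj (.top n le_rfl) := dif_pos le_rfl
    rw [e1]
    have e2 : (Zig.top (n - n) (by omega) : Zig m) = Zig.top 0 (Nat.zero_le m) := by
      congr 1
      omega
    rw [e2]
    exact hαβ

lemma descObj_bot_lt {k : ℕ} (hk : k < m + n) (h : k < n) :
    descObj α β (.bot k hk) = α.obj (.bot k h) := dif_pos h

lemma descObj_bot_ge {k : ℕ} (hk : k < m + n) (h : n ≤ k) :
    descObj α β (.bot k hk) = β.obj (.bot (k - n) (by omega)) := dif_neg (by omega)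

end Desc

end ZigPush
namespace ZigPush

section Desc2

open CategoryTheory Zig

variable {m n : ℕ} {C : Type*} [Category C] (α : Zig n ⥤ C) (β : Zig m ⥤ C)
  (hαβ : α.obj (Zig.zlast n) = β.obj (Zig.zfirst m))

/-- morphism from a `top` to a `bot`, mapped by the descent functor -/
def descTB (k j : ℕ) (hk : k ≤ m + n) (hj : j < m + n)
    (h : k = j ∨ k = j + 1) :
    descObj α β (.top k hk) ⟶ descObj α β (.bot j hj) :=
  if hjn : j < n then
    eqToHom (descObj_top_le α β hk (by omega)) ≫
      α.map (homOfLE (show Zig.le (.top k (by omega)) (.bot j hjn) from h)) ≫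
      eqToHom (descObj_bot_lt α β hj hjn).symm
  else
    eqToHom (descObj_top_ge α β hαβ hk (by omega)) ≫
      β.map (homOfLE (show Zig.le (.top (k - n) (by omega)) (.bot (j - n) (by omega)) from
        by rcases h with h | h <;> [left; right] <;> omega)) ≫
      eqToHom (descObj_bot_ge α β hj (by omega)).symm

/-- the descent functor `Zig (m+n) ⥤ C` -/
def desc : Zig (m + n) ⥤ C where
  obj := descObj α β
  map {x y} f :=
    match x, y, f with
    | .top k hk, .top k' hk', f =>
        eqToHom (by obtain rfl : k = k' := f.down.down; rfl)
    | .bot k hk, .bot k' hk', f =>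
        eqToHom (by obtain rfl : k = k' := f.down.down; rfl)
    | .bot _ _, .top _ _, f => (f.down.down : False).elim
    | .top k hk, .bot j hj, f => descTB α β hαβ k j hk hj f.down.down
  map_id x := by
    cases x <;> simp
  map_comp {x y z} f g := by
    cases x with
    | top k hk =>
      cases y with
      | top k' hk' =>
        obtain rfl : k = k' := f.down.down
        cases z with
        | top k'' hk'' =>
          obtain rfl : k = k'' := g.down.down
          simp
        | bot j hj =>
          simp
      | bot j hj =>
        cases z with
        | top k'' hk'' => exact (g.down.down : False).elim
        | bot j' hj' =>
          obtain rfl : j = j' := g.down.down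
          simp
    | bot j hj =>
      cases y with
      | top k' hk' => exact (f.down.down : False).elim
      | bot j' hj' =>
        obtain rfl : j = j' := f.down.down
        cases z with
        | top k'' hk'' => exact (g.down.down : False).elim
        | bot j'' hj'' =>
          obtain rfl : j = j'' := g.down.down
          simp

end Desc2

end ZigPush
namespace ZigPush

section Fac

open CategoryTheory Zig

variable {m n : ℕ} {C : Type*} [Category C] (α : Zig n ⥤ C) (β : Zig m ⥤ C)
  (hαβ : α.obj (Zig.zlast n) = β.obj (Zig.zfirst m))

/-- inclusion functor -/
def inclF (m n : ℕ) : Zig n ⥤ Zig (m + n) := (inclFun_mono (m := m) (n := n)).functor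

/-- shifted inclusion functor -/
def shiftF (m n : ℕ) : Zig m ⥤ Zig (m + n) := (shiftFun_mono (m := m) (n := n)).functor

lemma eqToHom_sandwich {X Y X₁ Y₁ X₂ Y₂ : C} (g : X ⟶ Y) (a : X₁ = X) (b : Y = Y₁)
    (c : X₁ = X₂) (d : X₂ = X) (e : Y = Y₂) (f : Y₂ = Y₁) :
    eqToHom a ≫ g ≫ eqToHom b = eqToHom c ≫ (eqToHom d ≫ g ≫ eqToHom e) ≫ eqToHom f := by
  cases a; cases b; cases d; cases e; simp

lemma incl_comp_desc : inclF m n ⋙ desc α β hαβ = α := by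
  apply CategoryTheory.Functor.ext (h_obj := ?_) (h_map := ?_)
  · intro x
    cases x with
    | top k hk => exact descObj_top_le α β (by omega) hk
    | bot k hk => exact descObj_bot_lt α β (by omega) hk
  · intro x y f
    cases x with
    | top k hk =>
      cases y with
      | top k' hk' =>
        obtain rfl : k = k' := f.down.down
        rw [Subsingleton.elim f (𝟙 _)]
        simp [desc, inclF, inclFun, Monotone.functor]
        exact ((eqToHom_trans _ _).trans (eqToHom_refl _ _)).symm
      | bot j hj =>
        show descTB α β hαβ k j (by omega) (by omega) f.down.down = _
        unfold descTB
        rw [dif_pos hj]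
        have hall : ∀ (g : (Zig.top k (by omega : k ≤ n) : Zig n) ⟶ .bot j hj),
            α.map g = α.map f := fun g => by rw [Subsingleton.elim g f]
        rw [hall]
        rfl
    | bot j hj =>
      cases y with
      | top k' hk' => exact (f.down.down : False).elim
      | bot j' hj' =>
        obtain rfl : j = j' := f.down.down
        rw [Subsingleton.elim f (𝟙 _)]
        simp [desc, inclF, inclFun, Monotone.functor]
        exact ((eqToHom_trans _ _).trans (eqToHom_refl _ _)).symm

lemma shift_comp_desc : shiftF m n ⋙ desc α β hαβ = β := by
  apply CategoryTheory.Functor.ext (h_obj := ?_) (h_map := ?_)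
  · intro x
    cases x with
    | top k hk =>
      rw [show (shiftF m n ⋙ desc α β hαβ).obj (.top k hk) =
        descObj α β (.top (n + k) (by omega)) from rfl]
      rw [descObj_top_ge α β hαβ _ (by omega)]
      have e : (Zig.top (n + k - n) (by omega) : Zig m) = Zig.top k hk := by
        congr 1
        omega
      rw [e]
    | bot k hk =>
      rw [show (shiftF m n ⋙ desc α β hαβ).obj (.bot k hk) =
        descObj α β (.bot (n + k) (by omega)) from rfl]
      rw [descObj_bot_ge α β _ (by omega)]
      have e : (Zig.bot (n + k - n) (by omega) : Zig m) = Zig.bot k hk := by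
        congr 1
        omega
      rw [e]
  · intro x y f
    cases x with
    | top k hk =>
      cases y with
      | top k' hk' =>
        obtain rfl : k = k' := f.down.down
        rw [Subsingleton.elim f (𝟙 _)]
        simp [desc, shiftF, shiftFun, Monotone.functor]
        exact ((eqToHom_trans _ _).trans (eqToHom_refl _ _)).symm
      | bot j hj =>
        show descTB α β hαβ (n + k) (n + j) (by omega) (by omega)
          (by rcases (f.down.down : k = j ∨ k = j + 1) with h | h <;> [left; right] <;> omega) = _
        rw [descTB, dif_neg (by omega)]
        have hsub : (homOfLE (show Zig.le (.top (n + k - n) (by omega))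
            (.bot (n + j - n) (by omega)) from by
              rcases (f.down.down : k = j ∨ k = j + 1) with h | h <;> [left; right] <;> omega) :
            (Zig.top (n + k - n) (by omega) : Zig m) ⟶ .bot (n + j - n) (by omega)) =
            eqToHom (by congr 1; omega) ≫ f ≫ eqToHom (by congr 1; omega) :=
          Subsingleton.elim _ _
        rw [hsub]
        simp [eqToHom_map]
        rfl
    | bot j hj =>
      cases y with
      | top k' hk' => exact (f.down.down : False).elim
      | bot j' hj' =>
        obtain rfl : j = j' := f.down.down
        rw [Subsingleton.elim f (𝟙 _)]
        simp [desc, shiftF, shiftFun, Monotone.functor]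
        exact ((eqToHom_trans _ _).trans (eqToHom_refl _ _)).symm

end Fac

end ZigPush
namespace ZigPush

section Uniq

open CategoryTheory Zig

variable {m n : ℕ} {C : Type*} [Category C] (α : Zig n ⥤ C) (β : Zig m ⥤ C)
  (hαβ : α.obj (Zig.zlast n) = β.obj (Zig.zfirst m))

lemma desc_uniq (μ : Zig (m + n) ⥤ C) (hl : inclF m n ⋙ μ = α)
    (hr : shiftF m n ⋙ μ = β) : μ = desc α β hαβ := by
  apply CategoryTheory.Functor.ext (h_obj := ?_) (h_map := ?_)
  · intro x
    cases x with
    | top k hk =>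
      show μ.obj _ = descObj α β (.top k hk)
      by_cases hkn : k ≤ n
      · rw [descObj_top_le α β hk hkn]
        exact Functor.congr_obj hl (.top k hkn)
      · rw [descObj_top_ge α β hαβ hk (by omega)]
        have e : (Zig.top k hk : Zig (m + n)) = (shiftF m n).obj (.top (k - n) (by omega)) := by
          show _ = Zig.top (n + (k - n)) _
          congr 1
          omega
        rw [e]
        exact Functor.congr_obj hr (.top (k - n) (by omega))
    | bot k hk =>
      show μ.obj _ = descObj α β (.bot k hk)
      by_cases hkn : k < n
      · rw [descObj_bot_lt α β hk hkn]
        exact Functor.congr_obj hl (.bot k hkn)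
      · rw [descObj_bot_ge α β hk (by omega)]
        have e : (Zig.bot k hk : Zig (m + n)) = (shiftF m n).obj (.bot (k - n) (by omega)) := by
          show _ = Zig.bot (n + (k - n)) _
          congr 1
          omega
        rw [e]
        exact Functor.congr_obj hr (.bot (k - n) (by omega))
  · intro x y f
    cases x with
    | top k hk =>
      cases y with
      | top k' hk' =>
        obtain rfl : k = k' := f.down.down
        rw [Subsingleton.elim f (𝟙 _)]
        simp
      | bot j hj =>
        have hkj : k = j ∨ k = j + 1 := f.down.down
        have hdesc : (desc α β hαβ).map f = descTB α β hαβ k j hk hj f.down.down := rfl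
        rw [hdesc]
        unfold descTB
        by_cases hjn : j < n
        · rw [dif_pos hjn]
          have hkn : k ≤ n := by omega
          have hf : f = (inclF m n).map
              (homOfLE (show Zig.le (Zig.top k hkn : Zig n) (.bot j hjn) from hkj)) :=
            Subsingleton.elim _ _
          rw [hf]
          change (inclF m n ⋙ μ).map _ = _
          rw [Functor.congr_hom hl]
          exact eqToHom_sandwich _ _ _ _ _ _ _
        · rw [dif_neg hjn]
          have hkge : n ≤ k := by omega
          have e1 : (Zig.top k hk : Zig (m + n)) =
              (shiftF m n).obj (.top (k - n) (by omega)) := by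
            show _ = Zig.top (n + (k - n)) _
            congr 1
            omega
          have e2 : (shiftF m n).obj (.bot (j - n) (by omega)) =
              (Zig.bot j hj : Zig (m + n)) := by
            show Zig.bot (n + (j - n)) _ = _
            congr 1
            omega
          have hg : Zig.le (Zig.top (k - n) (by omega : k - n ≤ m) : Zig m)
              (.bot (j - n) (by omega : j - n < m)) := by
            rcases hkj with h | h <;> [left; right] <;> omega
          have hf : f = eqToHom e1 ≫ (shiftF m n).map (homOfLE hg) ≫ eqToHom e2 :=
            Subsingleton.elim _ _
          have hcongr : (shiftF m n ⋙ μ).map (homOfLE hg) =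
              eqToHom (Functor.congr_obj hr _) ≫ β.map (homOfLE hg) ≫
                eqToHom (Functor.congr_obj hr _).symm :=
            Functor.congr_hom hr (homOfLE hg)
          rw [hf, μ.map_comp, μ.map_comp, ← Functor.comp_map, hcongr]
          simp [eqToHom_map]
          exact eqToHom_sandwich _ _ _ _ _ _ _
    | bot j hj =>
      cases y with
      | top k' hk' => exact (f.down.down : False).elim
      | bot j' hj' =>
        obtain rfl : j = j' := f.down.down
        rw [Subsingleton.elim f (𝟙 _)]
        simp

end Uniq

end ZigPush
open ZigPush in
/-- The pushout in `Cat` of the two endpoint inclusions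
`ι_n : * → I_n` and `ι_0 : * → I_m` is isomorphic to `I_{m+n}`; i.e. `I_{m+n}` fits as
the apex of a pushout square on the span `I_n ← * → I_m`. -/
theorem stmt_4 (m n : ℕ) :
    ∃ (F : Cat.of (Zig n) ⟶ Cat.of (Zig (m + n)))
      (G : Cat.of (Zig m) ⟶ Cat.of (Zig (m + n))),
      IsPushout (endLast n) (endFirst m) F G := by
  refine ⟨(inclF m n).toCatHom, (shiftF m n).toCatHom, ?_⟩
  have comm : endLast n ≫ (show Cat.of (Zig n) ⟶ Cat.of (Zig (m + n)) from (inclF m n).toCatHom) =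
      endFirst m ≫ (show Cat.of (Zig m) ⟶ Cat.of (Zig (m + n)) from (shiftF m n).toCatHom) := by
    apply Cat.ext
    apply CategoryTheory.Functor.ext (h_obj := ?_) (h_map := ?_)
    · rintro ⟨⟨⟩⟩
      rfl
    · rintro ⟨⟨⟩⟩ ⟨⟨⟩⟩ f
      obtain ⟨⟨h⟩⟩ := f
      simp [endLast, endFirst]
      exact Subsingleton.elim (α := ((inclF m n).obj (Zig.zlast n) ⟶ (inclF m n).obj (Zig.zlast n))) _ _
  have hcolim : IsColimit (PushoutCocone.mk _ _ comm) := by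
    apply PushoutCocone.IsColimit.mk comm
    case desc =>
      intro s
      exact (ZigPush.desc s.inl.toFunctor s.inr.toFunctor
        (Functor.congr_obj (congrArg Cat.Hom.toFunctor s.condition) ⟨PUnit.unit⟩)).toCatHom
    case fac_left =>
      intro s
      exact Cat.ext (incl_comp_desc s.inl.toFunctor s.inr.toFunctor _)
    case fac_right =>
      intro s
      exact Cat.ext (shift_comp_desc s.inl.toFunctor s.inr.toFunctor _)
    case uniq =>
      intro s μ h1 h2
      exact Cat.ext (desc_uniq s.inl.toFunctor s.inr.toFunctor _ μ.toFunctor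
        (congrArg Cat.Hom.toFunctor h1) (congrArg Cat.Hom.toFunctor h2))
  exact IsPushout.of_isColimit hcolim
end

section
/- Let A be a finite planar tree and let B, C ∈ 𝓛(A). Then the levelwise union B ∪_A C (the presheaf of sets whose value at k is B_k ∪ C_k, glued along A) carries the structure of a finite planar tree (i.e. compatible linear orders on each level) in such a way that the natural levelwise inclusions B → B ∪_A C and C → B ∪_A C are morphisms of trees. -/
/-- A finite planar tree: a sequence of finite linearly ordered sets `level k` with
order-preserving structure maps `parent k : level (k+1) → level k`, such that `level 0`
is a singleton and `level k` is empty for all sufficiently large `k`. -/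
structure PTree where
  level : ℕ → Type
  ord : ∀ k, LinearOrder (level k)
  fin : ∀ k, Finite (level k)
  parent : ∀ k, level (k + 1) → level k
  parent_mono : ∀ (k : ℕ) (x y : level (k + 1)), (ord (k + 1)).le x y →
    (ord k).le (parent k x) (parent k y)
  root_nonempty : Nonempty (level 0)
  root_subsingleton : ∀ x y : level 0, x = y
  bounded : ∃ N, ∀ k, N ≤ k → IsEmpty (level k)

namespace PTree

instance (T : PTree) (k : ℕ) : LinearOrder (T.level k) := T.ord k
instance (T : PTree) (k : ℕ) : Finite (T.level k) := T.fin k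

/-- The set of vertices of a tree; a vertex `⟨k, x⟩` has height `k`. -/
def Vertex (T : PTree) : Type := Σ k, T.level k

/-- The `d`-fold iterated structure map (`downAux d : T_{j+d} → T_j`). -/
def downAux (T : PTree) : ∀ (d : ℕ) {j : ℕ}, T.level (j + d) → T.level j
  | 0, _, x => x
  | d + 1, j, x => T.downAux d (T.parent (j + d) x)

/-- The image of a vertex of height `k` in the level `j ≤ k`, under the iterated
structure maps. -/
def down (T : PTree) {j k : ℕ} (h : j ≤ k) (x : T.level k) : T.level j :=
  T.downAux (k - j) (cast (congrArg T.level (by omega)) x)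

/-- The relation `≺` on the vertices of a tree: `x ≺ y` iff either they have the same
height and `y < x` at that level, or `height x < height y` and the image of `y` at the
level of `x` is `≤ x`, or `height x > height y` and `y <` the image of `x` at the level
of `y`. -/
def prec (T : PTree) (x y : T.Vertex) : Prop :=
  if h : x.1 = y.1 then (cast (congrArg T.level h.symm) y.2) < x.2
  else if h' : x.1 < y.1 then T.down (le_of_lt h') y.2 ≤ x.2
  else y.2 < T.down (by omega : y.1 ≤ x.1) x.2

end PTree


/-- A morphism of finite planar trees: levelwise order-preserving maps commuting with the
structure maps. -/
structure TreeHom (A B : PTree) where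
  app : ∀ k, A.level k → B.level k
  mono : ∀ (k : ℕ) (x y : A.level k), x ≤ y → app k x ≤ app k y
  parent_comm : ∀ (k : ℕ) (x : A.level (k + 1)),
    B.parent k (app (k + 1) x) = app k (A.parent k x)

/-- Composition of tree morphisms. -/
def TreeHom.comp {A B C : PTree} (f : TreeHom A B) (g : TreeHom B C) : TreeHom A C where
  app k x := g.app k (f.app k x)
  mono k x y h := g.mono k _ _ (f.mono k x y h)
  parent_comm k x := by rw [g.parent_comm, f.parent_comm]

/-- `b` is the new vertex of a one-point extension: it is not in the image. -/
def IsNew {A B : PTree} (f : TreeHom A B) (k : ℕ) (b : B.level k) : Prop :=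
  ∀ a, f.app k a ≠ b

/-- `f : A → B` exhibits `B` as a tree obtained from `A` by adjoining a single new vertex:
`f` is a levelwise injection, at a unique level `k ≥ 1` exactly one vertex is added, and
at every other level `f` is a bijection.  This is the membership condition for `𝓛(A)`. -/
def IsOnePointExtension {A B : PTree} (f : TreeHom A B) : Prop :=
  (∀ k, Function.Injective (f.app k)) ∧
  ∃ k, 1 ≤ k ∧ (∃! b : B.level k, IsNew f k b) ∧
    ∀ j, j ≠ k → Function.Surjective (f.app j)

/-- `(D, i, j)` realizes the levelwise union `B ∪_A C`: the square commutes, `i` and `j`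
are levelwise injective, they are jointly surjective in every level, and their images
intersect exactly in (the image of) `A`. -/
def IsUnion {A B C D : PTree} (f : TreeHom A B) (g : TreeHom A C)
    (i : TreeHom B D) (j : TreeHom C D) : Prop :=
  f.comp i = g.comp j ∧
  (∀ k, Function.Injective (i.app k)) ∧ (∀ k, Function.Injective (j.app k)) ∧
  (∀ (k : ℕ) (d : D.level k), (∃ b, i.app k b = d) ∨ (∃ c, j.app k c = d)) ∧
  (∀ (k : ℕ) (b : B.level k) (c : C.level k),
    i.app k b = j.app k c → ∃ a, f.app k a = b ∧ g.app k a = c)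

section OrderAux

variable {α : Type*} [LinearOrder α] [Finite α]

/-- The index (rank) of an element in a finite linear order. -/
noncomputable def pidx (b : α) : ℕ := {b' | b' < b}.ncard

theorem pidx_lt_pidx {b b' : α} (h : b < b') : pidx b < pidx b' := by
  apply Set.ncard_lt_ncard _ (Set.toFinite _)
  constructor
  · exact fun x hx => lt_trans hx h
  · intro hsub
    exact lt_irrefl b (hsub h)

theorem pidx_le_iff {b b' : α} : pidx b ≤ pidx b' ↔ b ≤ b' := by
  constructor
  · intro h
    by_contra hc
    exact absurd h (not_le.2 (pidx_lt_pidx (not_le.1 hc)))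
  · intro h
    rcases eq_or_lt_of_le h with rfl | h
    · exact le_rfl
    · exact (pidx_lt_pidx h).le

theorem pidx_lt_iff {b b' : α} : pidx b < pidx b' ↔ b < b' := by
  rw [← not_le, ← not_le, pidx_le_iff]

/-- Segment lemma: membership in a lower set is detected by the index. -/
theorem mem_iff_pidx_lt {S : Set α} (hS : ∀ x y : α, x ≤ y → y ∈ S → x ∈ S) (b : α) :
    b ∈ S ↔ pidx b < S.ncard := by
  constructor
  · intro hb
    have h1 : {b' | b' ≤ b} ⊆ S := fun x hx => hS x b hx hb
    have h2 : {b' : α | b' ≤ b} = insert b {b' | b' < b} := by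
      ext x; simp [le_iff_lt_or_eq, or_comm]
    have h3 : ({b' | b' ≤ b} : Set α).ncard = pidx b + 1 := by
      rw [h2, Set.ncard_insert_of_notMem (by simp) (Set.toFinite _)]
      rfl
    have := Set.ncard_le_ncard h1 (Set.toFinite _)
    omega
  · intro h
    by_contra hb
    have h1 : S ⊆ {b' | b' < b} := by
      intro x hx
      rcases lt_or_ge x b with h' | h'
      · exact h'
      · exact absurd (hS b x h' hx) hb
    exact absurd h (not_lt.2 (Set.ncard_le_ncard h1 (Set.toFinite _)))

theorem exists_mem_not_mem {S T : Set α} (h : S.ncard < T.ncard) : ∃ a, a ∈ T ∧ a ∉ S := by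
  by_contra hc
  push_neg at hc
  exact absurd h (not_lt.2 (Set.ncard_le_ncard hc (Set.toFinite _)))

end OrderAux


set_option linter.unusedSectionVars false

theorem TreeHom.ext' {A B : PTree} {f g : TreeHom A B} (h : f.app = g.app) : f = g := by
  cases f; cases g; cases h; rfl

theorem hom_le_iff {A B : PTree} (f : TreeHom A B) (hinj : ∀ k, Function.Injective (f.app k))
    (k : ℕ) (x y : A.level k) : f.app k x ≤ f.app k y ↔ x ≤ y := by
  constructor
  · intro h
    rcases le_total x y with h' | h'
    · exact h'
    · exact le_of_eq (hinj k (le_antisymm (f.mono k y x h') h)).symm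
  · exact f.mono k x y

theorem hom_lt_iff {A B : PTree} (f : TreeHom A B) (hinj : ∀ k, Function.Injective (f.app k))
    (k : ℕ) (x y : A.level k) : f.app k x < f.app k y ↔ x < y := by
  rw [lt_iff_le_not_ge, lt_iff_le_not_ge, hom_le_iff f hinj, hom_le_iff f hinj]

section Union

variable {A B C : PTree} (f : TreeHom A B) (g : TreeHom A C) (K' : ℕ)
  (cs : C.level (K' + 1)) (a0 : A.level K')

/-- Levels of the union tree: `B` plus one extra point at level `K'+1`. -/
def Dlevel (k : ℕ) : Type := B.level k ⊕ PLift (k = K' + 1)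

/-- number of elements of `A` below `b` at level `K'+1` (via `f`). -/
noncomputable def cntB (b : B.level (K' + 1)) : ℕ :=
  {a : A.level (K' + 1) | f.app (K' + 1) a < b}.ncard

/-- number of elements of `A` below the new vertex `cs` (via `g`). -/
noncomputable def cntC : ℕ := {a : A.level (K' + 1) | g.app (K' + 1) a < cs}.ncard

open Classical in
noncomputable def ltn (b : B.level (K' + 1)) : Prop :=
  if h : ∃ a, f.app (K' + 1) a = b then g.app (K' + 1) h.choose < cs
  else cntB f K' b < cntC g K' cs ∨
    (cntB f K' b = cntC g K' cs ∧ B.parent K' b ≤ f.app K' a0)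

noncomputable def mval : ℕ := {b : B.level (K' + 1) | ltn f g K' cs a0 b}.ncard

noncomputable def rnk {k : ℕ} : Dlevel (B := B) K' k → ℕ
  | .inl b => 2 * pidx b + 2
  | .inr _ => 2 * mval f g K' cs a0 + 1

theorem rnk_inj {k : ℕ} : Function.Injective (rnk f g K' cs a0 (k := k)) := by
  intro x y h
  cases x with
  | inl b => cases y with
    | inl b' =>
      simp only [rnk] at h
      have : pidx b = pidx b' := by omega
      exact congrArg Sum.inl (le_antisymm (pidx_le_iff.1 this.le) (pidx_le_iff.1 this.ge))
    | inr p => simp only [rnk] at h; omega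
  | inr p => cases y with
    | inl b' => simp only [rnk] at h; omega
    | inr p' => exact congrArg Sum.inr (Subsingleton.elim _ _)

noncomputable def Dord (k : ℕ) : LinearOrder (Dlevel (B := B) K' k) :=
  LinearOrder.lift' (rnk f g K' cs a0) (rnk_inj f g K' cs a0)

theorem Dord_le_iff {k : ℕ} (x y : Dlevel (B := B) K' k) :
    (Dord f g K' cs a0 k).le x y ↔ rnk f g K' cs a0 x ≤ rnk f g K' cs a0 y := Iff.rfl

noncomputable def Dparent (k : ℕ) : Dlevel (B := B) K' (k + 1) → Dlevel (B := B) K' k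
  | .inl b => .inl (B.parent k b)
  | .inr h => .inl (cast (congrArg B.level (Nat.succ_injective h.down).symm) (f.app K' a0))

/-- the set of `A`-elements below `cs` is a lower set -/
theorem SC_lower : ∀ x y : A.level (K' + 1), x ≤ y →
    y ∈ {a | g.app (K' + 1) a < cs} → x ∈ {a | g.app (K' + 1) a < cs} :=
  fun x y hxy hy => lt_of_le_of_lt (g.mono _ x y hxy) hy

theorem SB_lower (b : B.level (K' + 1)) : ∀ x y : A.level (K' + 1), x ≤ y →
    y ∈ {a | f.app (K' + 1) a < b} → x ∈ {a | f.app (K' + 1) a < b} :=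
  fun x y hxy hy => lt_of_le_of_lt (f.mono _ x y hxy) hy

variable (finj : ∀ k, Function.Injective (f.app k))
  (ginj : ∀ k, Function.Injective (g.app k))
  (hnew : ∀ a, g.app (K' + 1) a ≠ cs)
  (ha0 : g.app K' a0 = C.parent K' cs)
  (hBu : ∀ b b' : B.level (K' + 1),
    (∀ a, f.app (K' + 1) a ≠ b) → (∀ a, f.app (K' + 1) a ≠ b') → b = b')
  (hCu : ∀ c : C.level (K' + 1), (∀ a, g.app (K' + 1) a ≠ c) → c = cs)
  (gsurj : ∀ j, j ≠ K' + 1 → Function.Surjective (g.app j))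

include finj ginj hnew ha0 hBu hCu gsurj

theorem ltn_image {a : A.level (K' + 1)} {b : B.level (K' + 1)}
    (hab : f.app (K' + 1) a = b) :
    ltn f g K' cs a0 b ↔ g.app (K' + 1) a < cs := by
  unfold ltn
  rw [dif_pos ⟨a, hab⟩]
  have h1 : (⟨a, hab⟩ : ∃ a, f.app (K' + 1) a = b).choose = a :=
    finj _ ((Exists.choose_spec (⟨a, hab⟩ : ∃ a, f.app (K' + 1) a = b)).trans hab.symm)
  rw [h1]

theorem ltn_nonimage {b : B.level (K' + 1)} (hb : ∀ a, f.app (K' + 1) a ≠ b) :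
    ltn f g K' cs a0 b ↔ (cntB f K' b < cntC g K' cs ∨
      (cntB f K' b = cntC g K' cs ∧ B.parent K' b ≤ f.app K' a0)) := by
  unfold ltn
  rw [dif_neg (fun h : ∃ a, _ => hb h.choose h.choose_spec)]


/-- `ltn` is a lower subset of `B.level (K'+1)`. -/
theorem ltn_lower {b b' : B.level (K' + 1)} (hbb : b ≤ b')
    (h : ltn f g K' cs a0 b') : ltn f g K' cs a0 b := by
  rcases eq_or_lt_of_le hbb with rfl | hlt
  · exact h
  by_cases hb : ∃ a, f.app (K' + 1) a = b
  · obtain ⟨a, ha⟩ := hb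
    rw [ltn_image f g K' cs a0 finj ginj hnew ha0 hBu hCu gsurj ha]
    by_cases hb' : ∃ a', f.app (K' + 1) a' = b'
    · obtain ⟨a', ha'⟩ := hb'
      rw [ltn_image f g K' cs a0 finj ginj hnew ha0 hBu hCu gsurj ha'] at h
      have : a < a' := (hom_lt_iff f finj _ a a').1 (by rw [ha, ha']; exact hlt)
      exact lt_of_le_of_lt (g.mono _ a a' this.le) h
    · push_neg at hb'
      rw [ltn_nonimage f g K' cs a0 finj ginj hnew ha0 hBu hCu gsurj hb'] at h
      have hcnt : cntB f K' b' ≤ cntC g K' cs := by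
        rcases h with h | ⟨h, _⟩
        · exact h.le
        · exact h.le
      -- a ∈ SB' so pidx a < cntB b' ≤ cntC, so a ∈ SC
      have hmem : a ∈ {a'' | f.app (K' + 1) a'' < b'} := by
        show f.app (K' + 1) a < b'; rw [ha]; exact hlt
      have h1 := (mem_iff_pidx_lt (SB_lower f K' b') a).1 hmem
      have h2 : pidx a < cntC g K' cs := lt_of_lt_of_le h1 hcnt
      exact (mem_iff_pidx_lt (SC_lower g K' cs) a).2 h2
  · push_neg at hb
    rw [ltn_nonimage f g K' cs a0 finj ginj hnew ha0 hBu hCu gsurj hb]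
    left
    by_cases hb' : ∃ a', f.app (K' + 1) a' = b'
    · obtain ⟨a', ha'⟩ := hb'
      rw [ltn_image f g K' cs a0 finj ginj hnew ha0 hBu hCu gsurj ha'] at h
      have h1 : {a'' | f.app (K' + 1) a'' < b} ⊆ {a'' : A.level (K' + 1) | a'' < a'} :=
        fun x hx => (hom_lt_iff f finj _ x a').1 (by rw [ha']; exact lt_trans hx hlt)
      have h2 : cntB f K' b ≤ pidx a' := Set.ncard_le_ncard h1 (Set.toFinite _)
      have h3 : pidx a' < cntC g K' cs := (mem_iff_pidx_lt (SC_lower g K' cs) a').1 h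
      omega
    · push_neg at hb'
      exact absurd (hBu b b' hb hb') (ne_of_lt hlt)

/-- characterization of `ltn` via ranks -/
theorem ltn_iff_pidx {b : B.level (K' + 1)} :
    ltn f g K' cs a0 b ↔ pidx b < mval f g K' cs a0 :=
  mem_iff_pidx_lt (fun x y hxy hy =>
    ltn_lower f g K' cs a0 finj ginj hnew ha0 hBu hCu gsurj hxy hy) b

/-- if `b` is below the new vertex, its parent is below the parent of the new vertex -/
theorem parent_le_of_ltn {b : B.level (K' + 1)} (h : ltn f g K' cs a0 b) :
    B.parent K' b ≤ f.app K' a0 := by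
  have key : ∀ a : A.level (K' + 1), g.app (K' + 1) a < cs →
      f.app K' (A.parent K' a) ≤ f.app K' a0 := by
    intro a hga
    have h1 : C.parent K' (g.app (K' + 1) a) ≤ C.parent K' cs :=
      C.parent_mono K' _ _ hga.le
    rw [g.parent_comm, ← ha0] at h1
    exact f.mono K' _ _ ((hom_le_iff g ginj K' _ _).1 h1)
  by_cases hb : ∃ a, f.app (K' + 1) a = b
  · obtain ⟨a, ha⟩ := hb
    rw [ltn_image f g K' cs a0 finj ginj hnew ha0 hBu hCu gsurj ha] at h
    calc B.parent K' b = f.app K' (A.parent K' a) := by rw [← ha, f.parent_comm]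
    _ ≤ f.app K' a0 := key a h
  · push_neg at hb
    rw [ltn_nonimage f g K' cs a0 finj ginj hnew ha0 hBu hCu gsurj hb] at h
    rcases h with h | ⟨_, h⟩
    · obtain ⟨a, ha1, ha2⟩ := exists_mem_not_mem h
      have hble : b ≤ f.app (K' + 1) a := not_lt.1 ha2
      calc B.parent K' b ≤ B.parent K' (f.app (K' + 1) a) := B.parent_mono K' _ _ hble
      _ = f.app K' (A.parent K' a) := f.parent_comm K' a
      _ ≤ f.app K' a0 := key a ha1
    · exact h

theorem le_parent_of_not_ltn {b : B.level (K' + 1)} (h : ¬ ltn f g K' cs a0 b) :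
    f.app K' a0 ≤ B.parent K' b := by
  have key : ∀ a : A.level (K' + 1), cs ≤ g.app (K' + 1) a →
      f.app K' a0 ≤ f.app K' (A.parent K' a) := by
    intro a hga
    have h1 : C.parent K' cs ≤ C.parent K' (g.app (K' + 1) a) :=
      C.parent_mono K' _ _ hga
    rw [g.parent_comm, ← ha0] at h1
    exact f.mono K' _ _ ((hom_le_iff g ginj K' _ _).1 h1)
  by_cases hb : ∃ a, f.app (K' + 1) a = b
  · obtain ⟨a, ha⟩ := hb
    rw [ltn_image f g K' cs a0 finj ginj hnew ha0 hBu hCu gsurj ha] at h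
    calc f.app K' a0 ≤ f.app K' (A.parent K' a) := key a (not_lt.1 h)
    _ = B.parent K' b := by rw [← ha, f.parent_comm]
  · push_neg at hb
    rw [ltn_nonimage f g K' cs a0 finj ginj hnew ha0 hBu hCu gsurj hb] at h
    push_neg at h
    obtain ⟨h1, h2⟩ := h
    rcases lt_or_eq_of_le h1 with hlt | heq
    · obtain ⟨a, ha1, ha2⟩ := exists_mem_not_mem hlt
      have : f.app (K' + 1) a < b := ha1
      calc f.app K' a0 ≤ f.app K' (A.parent K' a) := key a (not_lt.1 ha2)
      _ = B.parent K' (f.app (K' + 1) a) := (f.parent_comm K' a).symm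
      _ ≤ B.parent K' b := B.parent_mono K' _ _ this.le
    · exact (h2 heq.symm).le

theorem Dparent_mono (k : ℕ) (x y : Dlevel (B := B) K' (k + 1))
    (h : (Dord f g K' cs a0 (k + 1)).le x y) :
    (Dord f g K' cs a0 k).le (Dparent f K' a0 k x) (Dparent f K' a0 k y) := by
  rw [Dord_le_iff] at h ⊢
  cases x with
  | inl b =>
    cases y with
    | inl b' =>
      show 2 * pidx (B.parent k b) + 2 ≤ 2 * pidx (B.parent k b') + 2
      have hbb : b ≤ b' := pidx_le_iff.1 (by simp only [rnk] at h; omega)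
      have := pidx_le_iff.2 (B.parent_mono k b b' hbb)
      omega
    | inr hk =>
      obtain rfl : K' = k := (Nat.succ_injective hk.down).symm
      have hb : ltn f g K' cs a0 b := by
        rw [ltn_iff_pidx f g K' cs a0 finj ginj hnew ha0 hBu hCu gsurj]
        simp only [rnk] at h; omega
      have hle : B.parent K' b ≤ f.app K' a0 :=
        parent_le_of_ltn f g K' cs a0 finj ginj hnew ha0 hBu hCu gsurj hb
      show rnk f g K' cs a0 (Sum.inl (B.parent K' b)) ≤
        rnk f g K' cs a0 (Sum.inl (f.app K' a0))
      have := pidx_le_iff.2 hle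
      simp only [rnk]; omega
  | inr hk =>
    obtain rfl : K' = k := (Nat.succ_injective hk.down).symm
    cases y with
    | inl b' =>
      have hb : ¬ ltn f g K' cs a0 b' := by
        rw [ltn_iff_pidx f g K' cs a0 finj ginj hnew ha0 hBu hCu gsurj]
        simp only [rnk] at h; omega
      have hle : f.app K' a0 ≤ B.parent K' b' :=
        le_parent_of_not_ltn f g K' cs a0 finj ginj hnew ha0 hBu hCu gsurj hb
      show rnk f g K' cs a0 (Sum.inl (f.app K' a0)) ≤
        rnk f g K' cs a0 (Sum.inl (B.parent K' b'))
      have := pidx_le_iff.2 hle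
      simp only [rnk]; omega
    | inr hk' =>
      show rnk f g K' cs a0 (Sum.inl (f.app K' a0)) ≤
        rnk f g K' cs a0 (Sum.inl (f.app K' a0))
      exact le_rfl

/-- The union tree. -/
noncomputable def DT : PTree where
  level := Dlevel (B := B) K'
  ord := Dord f g K' cs a0
  fin k := by
    have h1 : Finite (B.level k) := B.fin k
    have hs : Subsingleton (PLift (k = K' + 1)) := ⟨fun a b => by cases a; cases b; rfl⟩
    have h2 : Finite (PLift (k = K' + 1)) := Finite.of_subsingleton
    exact Finite.instSum
  parent := Dparent f K' a0
  parent_mono := Dparent_mono f g K' cs a0 finj ginj hnew ha0 hBu hCu gsurj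
  root_nonempty := ⟨Sum.inl B.root_nonempty.some⟩
  root_subsingleton x y := by
    cases x with
    | inl b =>
      cases y with
      | inl b' => exact congrArg Sum.inl (B.root_subsingleton b b')
      | inr h => exact absurd h.down (by omega)
    | inr h => exact absurd h.down (by omega)
  bounded := by
    obtain ⟨N, hN⟩ := B.bounded
    refine ⟨max N (K' + 2), fun k hk => ⟨fun x => ?_⟩⟩
    cases x with
    | inl b => exact (hN k (le_trans (le_max_left _ _) hk)).false b
    | inr h => exact absurd h.down (by omega)
/-- inclusion of `B` into the union. -/
noncomputable def ihom : TreeHom B (DT f g K' cs a0 finj ginj hnew ha0 hBu hCu gsurj) where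
  app k b := Sum.inl b
  mono k x y h := by
    show rnk f g K' cs a0 (Sum.inl x) ≤ rnk f g K' cs a0 (Sum.inl y)
    have := pidx_le_iff.2 h
    simp only [rnk]; omega
  parent_comm k x := rfl

open Classical in
noncomputable def japp (k : ℕ) (c : C.level k) : Dlevel (B := B) K' k :=
  if h : ∃ a, g.app k a = c then Sum.inl (f.app k h.choose)
  else Sum.inr ⟨by by_contra hkk; exact h (gsurj k hkk c)⟩

theorem japp_image {k : ℕ} {a : A.level k} {c : C.level k} (h : g.app k a = c) :
    japp f g K' gsurj k c = Sum.inl (f.app k a) := by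
  unfold japp
  erw [dif_pos ⟨a, h⟩]
  have h1 : (⟨a, h⟩ : ∃ a, g.app k a = c).choose = a :=
    ginj k ((Exists.choose_spec (⟨a, h⟩ : ∃ a, g.app k a = c)).trans h.symm)
  rw [h1]

theorem japp_new : japp f g K' gsurj (K' + 1) cs = Sum.inr ⟨rfl⟩ := by
  unfold japp
  erw [dif_neg (fun h : ∃ a, _ => hnew h.choose h.choose_spec)]

/-- inclusion of `C` into the union. -/
noncomputable def jhom : TreeHom C (DT f g K' cs a0 finj ginj hnew ha0 hBu hCu gsurj) where
  app := japp f g K' gsurj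
  mono k c c' h := by
    by_cases h1 : ∃ a, g.app k a = c
    · obtain ⟨a, ha⟩ := h1
      by_cases h2 : ∃ a', g.app k a' = c'
      · obtain ⟨a', ha'⟩ := h2
        rw [japp_image f g K' cs a0 finj ginj hnew ha0 hBu hCu gsurj ha,
          japp_image f g K' cs a0 finj ginj hnew ha0 hBu hCu gsurj ha']
        have haa : a ≤ a' := (hom_le_iff g ginj k a a').1 (by rw [ha, ha']; exact h)
        show rnk f g K' cs a0 (Sum.inl (f.app k a)) ≤ rnk f g K' cs a0 (Sum.inl (f.app k a'))
        have := pidx_le_iff.2 (f.mono k a a' haa)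
        simp only [rnk]; omega
      · have hk : k = K' + 1 := by by_contra hkk; exact h2 (gsurj k hkk c')
        subst hk
        push_neg at h2
        have hc' : c' = cs := hCu c' h2
        rw [hc', japp_image f g K' cs a0 finj ginj hnew ha0 hBu hCu gsurj ha,
          japp_new f g K' cs a0 finj ginj hnew ha0 hBu hCu gsurj]
        have hlt : g.app (K' + 1) a < cs :=
          lt_of_le_of_ne (by rw [ha]; rw [hc'] at h; exact h) (hnew a)
        have hl : ltn f g K' cs a0 (f.app (K' + 1) a) :=
          (ltn_image f g K' cs a0 finj ginj hnew ha0 hBu hCu gsurj rfl).2 hlt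
        have hp := (ltn_iff_pidx f g K' cs a0 finj ginj hnew ha0 hBu hCu gsurj).1 hl
        show rnk f g K' cs a0 (Sum.inl (f.app (K' + 1) a)) ≤
          rnk f g K' cs a0 (Sum.inr ⟨rfl⟩)
        simp only [rnk]; omega
    · have hk : k = K' + 1 := by by_contra hkk; exact h1 (gsurj k hkk c)
      subst hk
      push_neg at h1
      have hc : c = cs := hCu c h1
      by_cases h2 : ∃ a', g.app (K' + 1) a' = c'
      · obtain ⟨a', ha'⟩ := h2
        rw [hc, japp_image f g K' cs a0 finj ginj hnew ha0 hBu hCu gsurj ha',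
          japp_new f g K' cs a0 finj ginj hnew ha0 hBu hCu gsurj]
        have hlt : cs ≤ g.app (K' + 1) a' := by rw [ha']; rw [hc] at h; exact h
        have hnl : ¬ ltn f g K' cs a0 (f.app (K' + 1) a') := by
          rw [ltn_image f g K' cs a0 finj ginj hnew ha0 hBu hCu gsurj rfl]
          exact not_lt.2 hlt
        have hp := (not_congr
          (ltn_iff_pidx f g K' cs a0 finj ginj hnew ha0 hBu hCu gsurj)).1 hnl
        show rnk f g K' cs a0 (Sum.inr ⟨rfl⟩) ≤
          rnk f g K' cs a0 (Sum.inl (f.app (K' + 1) a'))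
        simp only [rnk]; omega
      · push_neg at h2
        have hc' : c' = cs := hCu c' h2
        rw [hc, hc']
        exact le_rfl
  parent_comm k x := by
    by_cases h1 : ∃ a, g.app (k + 1) a = x
    · obtain ⟨a, ha⟩ := h1
      rw [japp_image f g K' cs a0 finj ginj hnew ha0 hBu hCu gsurj ha]
      show Sum.inl (B.parent k (f.app (k + 1) a)) = japp f g K' gsurj k (C.parent k x)
      rw [← ha, g.parent_comm k a,
        japp_image f g K' cs a0 finj ginj hnew ha0 hBu hCu gsurj
          (rfl : g.app k (A.parent k a) = _), f.parent_comm k a]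
    · have hk : k + 1 = K' + 1 := by by_contra hkk; exact h1 (gsurj (k + 1) hkk x)
      obtain rfl : K' = k := (Nat.succ_injective hk).symm
      push_neg at h1
      have hx : x = cs := hCu x h1
      rw [hx, japp_new f g K' cs a0 finj ginj hnew ha0 hBu hCu gsurj, ← ha0,
        japp_image f g K' cs a0 finj ginj hnew ha0 hBu hCu gsurj
          (rfl : g.app K' a0 = _)]
      rfl

theorem union_ok : IsUnion f g (ihom f g K' cs a0 finj ginj hnew ha0 hBu hCu gsurj)
    (jhom f g K' cs a0 finj ginj hnew ha0 hBu hCu gsurj) := by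
  refine ⟨?_, ?_, ?_, ?_, ?_⟩
  · apply TreeHom.ext'
    funext k a
    show Sum.inl (f.app k a) = japp f g K' gsurj k (g.app k a)
    rw [japp_image f g K' cs a0 finj ginj hnew ha0 hBu hCu gsurj
      (rfl : g.app k a = _)]
  · intro k x y h
    exact Sum.inl.inj h
  · intro k c c' h
    replace h : japp f g K' gsurj k c = japp f g K' gsurj k c' := h
    by_cases h1 : ∃ a, g.app k a = c
    · obtain ⟨a, ha⟩ := h1
      rw [japp_image f g K' cs a0 finj ginj hnew ha0 hBu hCu gsurj ha] at h
      by_cases h2 : ∃ a', g.app k a' = c'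
      · obtain ⟨a', ha'⟩ := h2
        rw [japp_image f g K' cs a0 finj ginj hnew ha0 hBu hCu gsurj ha'] at h
        rw [← ha, ← ha', finj k (Sum.inl.inj h)]
      · have hk : k = K' + 1 := by by_contra hkk; exact h2 (gsurj k hkk c')
        subst hk
        push_neg at h2
        rw [hCu c' h2, japp_new f g K' cs a0 finj ginj hnew ha0 hBu hCu gsurj] at h
        exact absurd h (by simp)
    · have hk : k = K' + 1 := by by_contra hkk; exact h1 (gsurj k hkk c)
      subst hk
      push_neg at h1
      by_cases h2 : ∃ a', g.app (K' + 1) a' = c'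
      · obtain ⟨a', ha'⟩ := h2
        rw [hCu c h1, japp_new f g K' cs a0 finj ginj hnew ha0 hBu hCu gsurj,
          japp_image f g K' cs a0 finj ginj hnew ha0 hBu hCu gsurj ha'] at h
        exact absurd h (by simp)
      · push_neg at h2
        rw [hCu c h1, hCu c' h2]
  · intro k d
    cases d with
    | inl b => exact Or.inl ⟨b, rfl⟩
    | inr h =>
      right
      obtain rfl : K' + 1 = k := h.down.symm
      refine ⟨cs, ?_⟩
      show japp f g K' gsurj (K' + 1) cs = Sum.inr h
      rw [japp_new f g K' cs a0 finj ginj hnew ha0 hBu hCu gsurj]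
  · intro k b c h
    replace h : Sum.inl b = japp f g K' gsurj k c := h
    by_cases h1 : ∃ a, g.app k a = c
    · obtain ⟨a, ha⟩ := h1
      rw [japp_image f g K' cs a0 finj ginj hnew ha0 hBu hCu gsurj ha] at h
      exact ⟨a, (Sum.inl.inj h).symm, ha⟩
    · have hk : k = K' + 1 := by by_contra hkk; exact h1 (gsurj k hkk c)
      subst hk
      push_neg at h1
      rw [hCu c h1, japp_new f g K' cs a0 finj ginj hnew ha0 hBu hCu gsurj] at h
      exact absurd h (by simp)

end Union

/-- If `B` and `C` are one-point extensions of a finite planar tree `A`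
(elements of `𝓛(A)`), then the levelwise union `B ∪_A C` carries the structure of a
finite planar tree in such a way that the inclusions of `B` and `C` are tree morphisms. -/
theorem stmt_10 {A B C : PTree} (f : TreeHom A B) (g : TreeHom A C)
    (hf : IsOnePointExtension f) (hg : IsOnePointExtension g) :
    ∃ (D : PTree) (i : TreeHom B D) (j : TreeHom C D), IsUnion f g i j := by
  obtain ⟨finj, L, hL1, hBex, fsurj⟩ := hf
  obtain ⟨ginj, K, hK1, hCex, gsurj⟩ := hg
  obtain ⟨K', rfl⟩ : ∃ t, K = t + 1 := ⟨K - 1, by omega⟩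
  obtain ⟨cs, hcs, hcu⟩ := hCex
  obtain ⟨a0, ha0⟩ := gsurj K' (by omega) (C.parent K' cs)
  have hnew : ∀ a, g.app (K' + 1) a ≠ cs := hcs
  have hCu : ∀ c : C.level (K' + 1), (∀ a, g.app (K' + 1) a ≠ c) → c = cs :=
    fun c hc => hcu c hc
  have hBu : ∀ b b' : B.level (K' + 1), (∀ a, f.app (K' + 1) a ≠ b) →
      (∀ a, f.app (K' + 1) a ≠ b') → b = b' := by
    intro b b' hb hb'
    by_cases hL : K' + 1 = L
    · subst hL
      obtain ⟨bs, hbs, hbu⟩ := hBex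
      rw [hbu b hb, hbu b' hb']
    · obtain ⟨a, ha⟩ := fsurj (K' + 1) hL b
      exact absurd ha (hb a)
  exact ⟨DT f g K' cs a0 finj ginj hnew ha0 hBu hCu gsurj,
    ihom f g K' cs a0 finj ginj hnew ha0 hBu hCu gsurj,
    jhom f g K' cs a0 finj ginj hnew ha0 hBu hCu gsurj,
    union_ok f g K' cs a0 finj ginj hnew ha0 hBu hCu gsurj⟩
end

section
/- A finite planar tree T is uniquely determined by its ordered sequence of leaves together with their heights and the heights of the regions between consecutive leaves: if T and T' are finite planar trees with the same number k of leaves, such that the i-th leaf of T (in the ≺-order) has the same height as the i-th leaf of T' for every 1 ≤ i ≤ k, and the height of the region between the i-th and (i+1)-st leaves of T equals that of T' for every 1 ≤ i ≤ k−1, then T and T' are isomorphic as trees. -/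
namespace PTree

/-- A vertex is a leaf (maximal vertex) if the fiber of the structure map over it is
empty. -/
def IsLeaf (T : PTree) (x : T.Vertex) : Prop :=
  ∀ y : T.level (x.1 + 1), T.parent x.1 y ≠ x.2

/-- The type of leaves of a tree. -/
def Leaf (T : PTree) : Type := { x : T.Vertex // T.IsLeaf x }

/-- The vertices `x` and `y` lie above a common vertex at height `m`. -/
def commonAt (T : PTree) (x y : T.Vertex) (m : ℕ) : Prop :=
  ∃ (hx : m ≤ x.1) (hy : m ≤ y.1), T.down hx x.2 = T.down hy y.2

/-- The height of the region between two vertices: the height of the highest vertex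
below both of them. -/
noncomputable def regionHeight (T : PTree) (x y : T.Vertex) : ℕ :=
  sSup { m | T.commonAt x y m }

/-- `x` and `y` are consecutive leaves in the order `≺`. -/
def ConsecLeaves (T : PTree) (x y : T.Leaf) : Prop :=
  T.prec x.1 y.1 ∧ ¬ ∃ z : T.Leaf, T.prec x.1 z.1 ∧ T.prec z.1 y.1

end PTree

namespace PTree

variable {T : PTree}

lemma downAux_cast {j : ℕ} (d e : ℕ) (hde : d = e) (x : T.level (j + d)) :
    T.downAux d x = T.downAux e (cast (by rw [hde]) x) := by
  subst hde; simp

lemma down_def {j k : ℕ} (h : j ≤ k) (d : ℕ) (hk : k = j + d) (x : T.level k) :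
    T.down h x = T.downAux d (cast (congrArg T.level hk) x) := by
  subst hk
  unfold down
  rw [downAux_cast (j + d - j) d (by omega)]
  congr 1
  rw [cast_cast]

lemma down_refl {k : ℕ} (h : k ≤ k) (x : T.level k) : T.down h x = x := by
  rw [down_def h 0 rfl]
  exact cast_eq _ x

lemma down_parent {j k : ℕ} (h : j ≤ k) (h' : j ≤ k + 1) (x : T.level (k + 1)) :
    T.down h' x = T.down h (T.parent k x) := by
  obtain ⟨d, rfl⟩ : ∃ d, k = j + d := ⟨k - j, by omega⟩
  rw [down_def h' (d + 1) rfl, down_def h d rfl]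
  rw [cast_eq, cast_eq]
  rfl

end PTree
namespace PTree

variable {T : PTree}

lemma down_trans {i j : ℕ} (h1 : i ≤ j) : ∀ {k : ℕ} (h2 : j ≤ k) (x : T.level k),
    T.down h1 (T.down h2 x) = T.down (h1.trans h2) x := by
  intro k h2
  induction h2 with
  | refl => intro x; rw [T.down_refl]
  | @step k h ih =>
      intro x
      rw [T.down_parent h (Nat.le_succ_of_le h), T.down_parent (h1.trans h) (h1.trans (Nat.le_succ_of_le h))]
      exact ih _

lemma down_mono : ∀ {j k : ℕ} (h : j ≤ k) {x y : T.level k}, x ≤ y → T.down h x ≤ T.down h y := by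
  intro j k h
  induction h with
  | refl => intro x y hxy; rw [T.down_refl, T.down_refl]; exact hxy
  | @step k h ih =>
      intro x y hxy
      rw [T.down_parent h (Nat.le_succ_of_le h)]
      rw [show T.down (Nat.le_succ_of_le h) y = T.down h (T.parent k y) from T.down_parent h _ y]
      exact ih (T.parent_mono k x y hxy)

lemma parent_down {k n : ℕ} (h : k + 1 ≤ n) (h' : k ≤ n) (x : T.level n) :
    T.parent k (T.down h x) = T.down h' x := by
  have h0 : T.down (Nat.le_succ k) (T.down h x) = T.down h' x := T.down_trans _ h x
  rw [← h0, T.down_parent (le_refl k) (Nat.le_succ k), T.down_refl]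

lemma exists_leaf_above (T : PTree) (k : ℕ) (x : T.level k) :
    ∃ ℓ : T.Leaf, ∃ h : k ≤ ℓ.1.1, T.down h ℓ.1.2 = x := by
  obtain ⟨N, hN⟩ := T.bounded
  suffices H : ∀ (m k : ℕ), N ≤ k + m → ∀ x : T.level k,
      ∃ ℓ : T.Leaf, ∃ h : k ≤ ℓ.1.1, T.down h ℓ.1.2 = x from H (N - k) k (by omega) x
  intro m
  induction m with
  | zero => intro k hk x; exact ((hN k (by omega)).false x).elim
  | succ m ih =>
      intro k hk x
      by_cases hx : T.IsLeaf ⟨k, x⟩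
      · exact ⟨⟨⟨k, x⟩, hx⟩, le_refl k, T.down_refl _ _⟩
      · obtain ⟨y, hy⟩ : ∃ y : T.level (k + 1), T.parent k y = x := by
          simpa [IsLeaf] using hx
        obtain ⟨ℓ, h, hd⟩ := ih (k + 1) (by omega) y
        exact ⟨ℓ, le_trans (Nat.le_succ k) h, by rw [← hy, ← hd]; exact (T.parent_down h _ _).symm⟩

instance (T : PTree) : Finite T.Vertex := by
  obtain ⟨N, hN⟩ := T.bounded
  apply Finite.of_injective (fun v : T.Vertex =>
    (⟨⟨v.1, by by_contra h; exact (hN v.1 (by omega)).false v.2⟩, v.2⟩ : Σ k : Fin N, T.level k))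
  rintro ⟨k, x⟩ ⟨l, y⟩ h
  have h1 : k = l := congrArg (fun s : (Σ k : Fin N, T.level k) => (s.1 : ℕ)) h
  subst h1
  have h2 : HEq x y := Sigma.mk.inj_iff.mp h |>.2
  rw [eq_of_heq h2]

instance (T : PTree) : Finite T.Leaf := by
  unfold Leaf; infer_instance

lemma commonAt_mono {x y : T.Vertex} {m k : ℕ} (h : T.commonAt x y m) (hk : k ≤ m) :
    T.commonAt x y k := by
  obtain ⟨h1, h2, he⟩ := h
  exact ⟨le_trans hk h1, le_trans hk h2, by
    rw [← T.down_trans hk h1, ← T.down_trans hk h2, he]⟩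

lemma commonAt_zero (x y : T.Vertex) : T.commonAt x y 0 :=
  ⟨Nat.zero_le _, Nat.zero_le _, T.root_subsingleton _ _⟩

lemma commonAt_symm {x y : T.Vertex} {m : ℕ} (h : T.commonAt x y m) : T.commonAt y x m := by
  obtain ⟨h1, h2, he⟩ := h; exact ⟨h2, h1, he.symm⟩

lemma le_regionHeight_iff (x y : T.Vertex) (k : ℕ) :
    k ≤ T.regionHeight x y ↔ T.commonAt x y k := by
  have hbdd : BddAbove { m | T.commonAt x y m } := by
    refine ⟨x.1, fun m hm => ?_⟩
    obtain ⟨h1, _, _⟩ := hm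
    exact h1
  constructor
  · intro h
    exact commonAt_mono (Nat.sSup_mem ⟨0, by exact commonAt_zero x y⟩ hbdd) h
  · intro h
    exact le_csSup hbdd h

end PTree
namespace PTree

variable {T : PTree}

lemma prec_of_eq_lt {k : ℕ} {a b : T.level k} (h : b < a) :
    T.prec ⟨k, a⟩ ⟨k, b⟩ := by
  simp only [prec, dif_pos rfl]
  exact h

lemma prec_of_down_le {x y : T.Vertex} (hxy : x.1 < y.1) (h : T.down hxy.le y.2 ≤ x.2) :
    T.prec x y := by
  simp only [prec]
  rw [dif_neg (by omega), dif_pos hxy]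
  exact h

lemma prec_of_lt_down {x y : T.Vertex} (hyx : y.1 < x.1) (h : y.2 < T.down hyx.le x.2) :
    T.prec x y := by
  simp only [prec]
  rw [dif_neg (by omega), dif_neg (by omega)]
  exact h

lemma prec_elim_eq {k : ℕ} {a b : T.level k} (h : T.prec ⟨k, a⟩ ⟨k, b⟩) : b < a := by
  unfold prec at h
  rw [dif_pos rfl] at h
  exact h

lemma prec_elim_lt {x y : T.Vertex} (h : T.prec x y) (hxy : x.1 < y.1) :
    T.down hxy.le y.2 ≤ x.2 := by
  simp only [prec] at h
  rw [dif_neg (by omega), dif_pos hxy] at h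
  exact h

lemma prec_elim_gt {x y : T.Vertex} (h : T.prec x y) (hyx : y.1 < x.1) :
    y.2 < T.down hyx.le x.2 := by
  simp only [prec] at h
  rw [dif_neg (by omega), dif_neg (by omega)] at h
  exact h

/-- Lemma D: if `x ≺ y` then at any common level the image of `y` is `≤` that of `x`. -/
lemma down_le_of_prec {x y : T.Vertex} (h : T.prec x y) {k : ℕ}
    (hkx : k ≤ x.1) (hky : k ≤ y.1) : T.down hky y.2 ≤ T.down hkx x.2 := by
  obtain ⟨m, a⟩ := x
  obtain ⟨n, b⟩ := y
  simp only at hkx hky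
  rcases lt_trichotomy m n with hmn | rfl | hnm
  · have h' := prec_elim_lt h hmn
    have : T.down hky b = T.down hkx (T.down hmn.le b) := (T.down_trans hkx hmn.le b).symm
    rw [this]
    exact T.down_mono hkx h'
  · exact T.down_mono hkx (prec_elim_eq h).le
  · have h' := prec_elim_gt h hnm
    have : T.down hkx a = T.down hky (T.down hnm.le a) := (T.down_trans hky hnm.le a).symm
    rw [this]
    exact T.down_mono hky h'.le

/-- Lemma D': strict comparison at any common level implies `≺`. -/
lemma prec_of_down_lt {x y : T.Vertex} {k : ℕ} (hkx : k ≤ x.1) (hky : k ≤ y.1)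
    (h : T.down hky y.2 < T.down hkx x.2) : T.prec x y := by
  obtain ⟨m, a⟩ := x
  obtain ⟨n, b⟩ := y
  simp only at hkx hky
  rcases lt_trichotomy m n with hmn | rfl | hnm
  · apply prec_of_down_le hmn
    by_contra hc
    push_neg at hc
    have := T.down_mono hkx hc.le
    rw [T.down_trans hkx hmn.le] at this
    exact absurd h (not_lt.mpr this)
  · apply prec_of_eq_lt
    by_contra hc
    push_neg at hc
    exact absurd h (not_lt.mpr (T.down_mono hkx hc))
  · apply prec_of_lt_down hnm
    by_contra hc
    push_neg at hc
    have := T.down_mono hky hc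
    rw [T.down_trans hky hnm.le] at this
    exact absurd h (not_lt.mpr this)

lemma prec_irrefl (x : T.Vertex) (h : T.prec x x) : False := by
  obtain ⟨m, a⟩ := x
  exact lt_irrefl a (prec_elim_eq h)

lemma prec_asymm {x y : T.Vertex} (h1 : T.prec x y) (h2 : T.prec y x) : False := by
  obtain ⟨m, a⟩ := x
  obtain ⟨n, b⟩ := y
  rcases lt_trichotomy m n with hmn | rfl | hnm
  · exact absurd (prec_elim_lt h1 hmn) (not_le.mpr (prec_elim_gt h2 hmn))
  · exact lt_asymm (prec_elim_eq h1) (prec_elim_eq h2)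
  · exact absurd (prec_elim_lt h2 hnm) (not_le.mpr (prec_elim_gt h1 hnm))

lemma prec_total {x y : T.Vertex} (h : x ≠ y) : T.prec x y ∨ T.prec y x := by
  obtain ⟨m, a⟩ := x
  obtain ⟨n, b⟩ := y
  rcases lt_trichotomy m n with hmn | rfl | hnm
  · by_cases hc : T.down hmn.le b ≤ a
    · exact Or.inl (prec_of_down_le hmn hc)
    · exact Or.inr (prec_of_lt_down hmn (not_le.mp hc))
  · rcases lt_trichotomy a b with hab | rfl | hba
    · exact Or.inr (prec_of_eq_lt hab)
    · exact absurd rfl h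
    · exact Or.inl (prec_of_eq_lt hba)
  · by_cases hc : T.down hnm.le a ≤ b
    · exact Or.inr (prec_of_down_le hnm hc)
    · exact Or.inl (prec_of_lt_down hnm (not_le.mp hc))

end PTree
namespace PTree

variable {T : PTree}

lemma prec_trans {x y z : T.Vertex} (h1 : T.prec x y) (h2 : T.prec y z) : T.prec x z := by
  obtain ⟨hx, a⟩ := x
  obtain ⟨hy, b⟩ := y
  obtain ⟨hz, c⟩ := z
  by_cases hc1 : hy < hx ∧ hy ≤ hz
  · obtain ⟨hyx, hyz⟩ := hc1
    have g1 : b < T.down hyx.le a := prec_elim_gt h1 hyx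
    have g2 : T.down hyz c ≤ T.down (le_refl hy) b := T.down_le_of_prec h2 (le_refl hy) hyz
    rw [T.down_refl] at g2
    exact T.prec_of_down_lt hyx.le hyz (lt_of_le_of_lt g2 g1)
  · push_neg at hc1
    rcases lt_trichotomy hx hz with hlt | heq | hgt
    · have hxy : hx ≤ hy := by
        by_contra hcc; push_neg at hcc; have := hc1 hcc; omega
      have d1 : T.down hxy b ≤ a := by
        have := T.down_le_of_prec h1 (le_refl hx) hxy
        rwa [T.down_refl] at this
      have d2 : T.down hlt.le c ≤ T.down hxy b := T.down_le_of_prec h2 hxy hlt.le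
      exact T.prec_of_down_le hlt (le_trans d2 d1)
    · subst heq
      have hxy : hx ≤ hy := by
        by_contra hcc; push_neg at hcc; have := hc1 hcc; omega
      have d1 : T.down hxy b ≤ a := by
        have := T.down_le_of_prec h1 (le_refl hx) hxy
        rwa [T.down_refl] at this
      have d2 : c ≤ T.down hxy b := by
        have := T.down_le_of_prec h2 hxy (le_refl hx)
        rwa [T.down_refl] at this
      rcases eq_or_lt_of_le (le_trans d2 d1) with heqq | hltt
      · subst heqq
        exact (T.prec_asymm h1 h2).elim
      · exact prec_of_eq_lt hltt
    · have hzy : hz ≤ hy := by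
        by_contra hcc; push_neg at hcc
        have := hc1 (by omega); omega
      have d1 : T.down hzy b ≤ T.down hgt.le a := T.down_le_of_prec h1 hgt.le hzy
      have d2 : c ≤ T.down hzy b := by
        have := T.down_le_of_prec h2 hzy (le_refl hz)
        rwa [T.down_refl] at this
      rcases eq_or_lt_of_le (le_trans d2 d1) with heqq | hltt
      · exfalso
        have d1' : T.down hzy b ≤ c := heqq ▸ d1
        have hbc : T.down hzy b = c := le_antisymm d1' d2
        rcases eq_or_lt_of_le hzy with rfl | hzylt
        · rw [T.down_refl] at hbc
          have := prec_elim_eq h2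
          rw [hbc] at this
          exact lt_irrefl c this
        · have hg := prec_elim_gt h2 hzylt
          have hbc' : T.down hzylt.le b = c := hbc
          rw [hbc'] at hg
          exact lt_irrefl c hg
      · exact T.prec_of_lt_down hgt hltt

/-- Lemma E: a leaf between two vertices having a common point at level `k` also lies
above that common point. -/
lemma commonAt_of_between {x y : T.Vertex} (z : T.Leaf)
    (hxz : T.prec x z.1) (hzy : T.prec z.1 y) {k : ℕ} (h : T.commonAt x y k) :
    T.commonAt x z.1 k := by
  obtain ⟨hkx, hky, he⟩ := h
  -- first: k ≤ height of z
  have hkz : k ≤ z.1.1 := by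
    by_contra hcc
    push_neg at hcc
    set m := z.1.1 with hm
    have hmx : m ≤ x.1 := le_trans hcc.le hkx
    have hmy : m ≤ y.1 := le_trans hcc.le hky
    have hexy : T.down hmx x.2 = T.down hmy y.2 := by
      have e1 : T.down hmx x.2 = T.down hcc.le (T.down hkx x.2) := (T.down_trans hcc.le hkx x.2).symm
      have e2 : T.down hmy y.2 = T.down hcc.le (T.down hky y.2) := (T.down_trans hcc.le hky y.2).symm
      rw [e1, e2, he]
    have d1 : T.down (le_refl m) z.1.2 ≤ T.down hmx x.2 := T.down_le_of_prec hxz hmx (le_refl m)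
    have d2 : T.down hmy y.2 ≤ T.down (le_refl m) z.1.2 := T.down_le_of_prec hzy (le_refl m) hmy
    rw [T.down_refl] at d1 d2
    have hz2 : z.1.2 = T.down hmx x.2 := le_antisymm d1 (by rw [hexy]; exact d2)
    have hm1 : m + 1 ≤ x.1 := by omega
    exact z.2 (T.down hm1 x.2) (by rw [T.parent_down hm1 hmx, ← hz2])
  -- now the common point
  have d1 : T.down hkz z.1.2 ≤ T.down hkx x.2 := T.down_le_of_prec hxz hkx hkz
  have d2 : T.down hky y.2 ≤ T.down hkz z.1.2 := T.down_le_of_prec hzy hkz hky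
  exact ⟨hkx, hkz, (le_antisymm d1 (by rw [he]; exact d2)).symm⟩

end PTree
namespace PTree

variable {T : PTree}

lemma commonAt_trans {x y z : T.Vertex} {k : ℕ} (h1 : T.commonAt x y k)
    (h2 : T.commonAt y z k) : T.commonAt x z k := by
  obtain ⟨p1, p2, pe⟩ := h1
  obtain ⟨q1, q2, qe⟩ := h2
  exact ⟨p1, q2, pe.trans qe⟩

end PTree
/-- A finite planar tree is determined by its ordered sequence of
leaves, their heights, and the heights of the regions between consecutive leaves: given a
bijection between the leaves of `T` and `T'` preserving the order `≺`, the heights of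
leaves, and the region heights between consecutive leaves, the trees `T` and `T'` are
isomorphic. -/
theorem stmt_12 (T T' : PTree) (e : T.Leaf ≃ T'.Leaf)
    (hord : ∀ x y : T.Leaf, T.prec x.1 y.1 ↔ T'.prec (e x).1 (e y).1)
    (hht : ∀ x : T.Leaf, (e x).1.1 = x.1.1)
    (hreg : ∀ x y : T.Leaf, T.ConsecLeaves x y →
      T'.regionHeight (e x).1 (e y).1 = T.regionHeight x.1 y.1) :
    ∃ F : TreeHom T T', ∀ k, Function.Bijective (F.app k) := by
  classical
  have keyPrec : ∀ n : ℕ, ∀ (k : ℕ) (a b : T.Leaf), T.prec a.1 b.1 →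
      ({z : T.Leaf | T.prec a.1 z.1 ∧ T.prec z.1 b.1}).ncard = n →
      (T.commonAt a.1 b.1 k ↔ T'.commonAt (e a).1 (e b).1 k) := by
    intro n
    induction n using Nat.strong_induction_on with
    | _ n ih =>
      intro k a b hab hcard
      rcases Set.eq_empty_or_nonempty {z : T.Leaf | T.prec a.1 z.1 ∧ T.prec z.1 b.1}
        with hemp | ⟨z, hz1, hz2⟩
      · rw [Set.eq_empty_iff_forall_notMem] at hemp
        have cons : T.ConsecLeaves a b := ⟨hab, by rintro ⟨z, h1, h2⟩; exact hemp z ⟨h1, h2⟩⟩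
        have cons' : T'.ConsecLeaves (e a) (e b) := by
          refine ⟨(hord a b).1 hab, ?_⟩
          rintro ⟨z', h1, h2⟩
          obtain ⟨z, rfl⟩ := e.surjective z'
          exact hemp z ⟨(hord a z).2 h1, (hord z b).2 h2⟩
        have hr := hreg a b cons
        rw [← PTree.le_regionHeight_iff, ← PTree.le_regionHeight_iff, hr]
      · have hlt1 : ({w : T.Leaf | T.prec a.1 w.1 ∧ T.prec w.1 z.1}).ncard < n := by
          rw [← hcard]
          refine Set.ncard_lt_ncard ?_ (Set.toFinite _)
          refine (Set.ssubset_iff_of_subset ?_).mpr ⟨z, ⟨hz1, hz2⟩, fun hc => T.prec_irrefl z.1 hc.2⟩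
          rintro w ⟨hw1, hw2⟩
          exact ⟨hw1, T.prec_trans hw2 hz2⟩
        have hlt2 : ({w : T.Leaf | T.prec z.1 w.1 ∧ T.prec w.1 b.1}).ncard < n := by
          rw [← hcard]
          refine Set.ncard_lt_ncard ?_ (Set.toFinite _)
          refine (Set.ssubset_iff_of_subset ?_).mpr ⟨z, ⟨hz1, hz2⟩, fun hc => T.prec_irrefl z.1 hc.1⟩
          rintro w ⟨hw1, hw2⟩
          exact ⟨T.prec_trans hz1 hw1, hw2⟩
        have ih1 := ih _ hlt1 k a z hz1 rfl
        have ih2 := ih _ hlt2 k z b hz2 rfl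
        constructor
        · intro h
          have hxz : T.commonAt a.1 z.1 k := T.commonAt_of_between z hz1 hz2 h
          have hzb : T.commonAt z.1 b.1 k :=
            T.commonAt_trans (T.commonAt_symm hxz) h
          exact T'.commonAt_trans (ih1.mp hxz) (ih2.mp hzb)
        · intro h
          have hxz' : T'.commonAt (e a).1 (e z).1 k :=
            T'.commonAt_of_between (e z) ((hord a z).1 hz1) ((hord z b).1 hz2) h
          have hzb' : T'.commonAt (e z).1 (e b).1 k :=
            T'.commonAt_trans (T'.commonAt_symm hxz') h
          exact T.commonAt_trans (ih1.mpr hxz') (ih2.mpr hzb')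
  have keyAll : ∀ (k : ℕ) (a b : T.Leaf),
      T.commonAt a.1 b.1 k ↔ T'.commonAt (e a).1 (e b).1 k := by
    intro k a b
    by_cases hab : a = b
    · subst hab
      constructor
      · rintro ⟨h1, h2, -⟩
        have hh : k ≤ (e a).1.1 := by rw [hht]; exact h1
        exact ⟨hh, hh, rfl⟩
      · rintro ⟨h1, -, -⟩
        have hh : k ≤ a.1.1 := by rw [← hht a]; exact h1
        exact ⟨hh, hh, rfl⟩
    · have hne : a.1 ≠ b.1 := fun hc => hab (Subtype.ext hc)
      rcases T.prec_total hne with hp | hp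
      · exact keyPrec _ k a b hp rfl
      · constructor
        · intro h
          exact T'.commonAt_symm ((keyPrec _ k b a hp rfl).mp (T.commonAt_symm h))
        · intro h
          exact T.commonAt_symm ((keyPrec _ k b a hp rfl).mpr (T'.commonAt_symm h))
  choose lf hlf1 hlf2 using fun (k : ℕ) (x : T.level k) => T.exists_leaf_above k x
  have hlf1' : ∀ (k : ℕ) (x : T.level k), k ≤ (e (lf k x)).1.1 := fun k x => by
    rw [hht]; exact hlf1 k x
  have wd : ∀ (k : ℕ) (ℓ₁ ℓ₂ : T.Leaf) (h1 : k ≤ ℓ₁.1.1) (h2 : k ≤ ℓ₂.1.1),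
      T.down h1 ℓ₁.1.2 = T.down h2 ℓ₂.1.2 →
      ∀ (h1' : k ≤ (e ℓ₁).1.1) (h2' : k ≤ (e ℓ₂).1.1),
      T'.down h1' (e ℓ₁).1.2 = T'.down h2' (e ℓ₂).1.2 := by
    intro k l1 l2 h1 h2 hd h1' h2'
    obtain ⟨p1, p2, pe⟩ := (keyAll k l1 l2).mp ⟨h1, h2, hd⟩
    exact pe
  refine ⟨⟨fun k x => T'.down (hlf1' k x) (e (lf k x)).1.2, ?_, ?_⟩, ?_⟩
  · intro k x y hxy
    rcases eq_or_lt_of_le hxy with rfl | hlt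
    · exact le_refl _
    · have hp : T.prec (lf k y).1 (lf k x).1 := by
        refine T.prec_of_down_lt (hlf1 k y) (hlf1 k x) ?_
        rw [hlf2 k x, hlf2 k y]
        exact hlt
      exact T'.down_le_of_prec ((hord _ _).1 hp) (hlf1' k y) (hlf1' k x)
  · intro k x
    rw [T'.parent_down (hlf1' (k + 1) x) (le_trans (Nat.le_succ k) (hlf1' (k + 1) x))]
    refine wd k (lf (k + 1) x) (lf k (T.parent k x))
      (le_trans (Nat.le_succ k) (hlf1 (k + 1) x)) (hlf1 k _) ?_ _ _
    rw [← T.parent_down (hlf1 (k + 1) x) (le_trans (Nat.le_succ k) (hlf1 (k + 1) x)),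
      hlf2 (k + 1) x, hlf2 k (T.parent k x)]
  · intro k
    constructor
    · intro x y hFxy
      have hc' : T'.commonAt (e (lf k x)).1 (e (lf k y)).1 k :=
        ⟨hlf1' k x, hlf1' k y, hFxy⟩
      obtain ⟨p1, p2, pe⟩ := (keyAll k (lf k x) (lf k y)).mpr hc'
      rw [← hlf2 k x, ← hlf2 k y]
      exact pe
    · intro y'
      obtain ⟨ℓ', h', hd'⟩ := T'.exists_leaf_above k y'
      obtain ⟨ℓ, rfl⟩ := e.surjective ℓ'
      have hk : k ≤ ℓ.1.1 := by rw [← hht ℓ]; exact h'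
      refine ⟨T.down hk ℓ.1.2, ?_⟩
      have hw := wd k (lf k (T.down hk ℓ.1.2)) ℓ (hlf1 k _) hk (hlf2 k _) (hlf1' k _) h'
      exact hw.trans hd'
end
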